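/- arXiv:2211.04527 — 6 statements merged into one kernel-verified Lean document; each statement's English description precedes it below -/
import Mathlib

section
/- Let q ≡ 3 (mod 8) be a prime power and let η(x) = x^((q-1)/2) be the quadratic character of F_q (with η(0)=0). Then the function f(x) = x^2(η(x) + 3) is a bijection on F_q. -/
theorem wan_lidl_b3_is_permutation
    (F : Type*) [Field F] [Fintype F]
    (q : ℕ) (hq : Fintype.card F = q) (hq3 : q % 8 = 3) :
    Function.Bijective (fun x : F => x ^ 2 * (x ^ ((q - 1) / 2) + 3)) := by
  have hchar : ringChar F ≠ 2 := by
    intro h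
    have := FiniteField.even_card_of_char_two (F := F) h
    omega
  have h2ne : (2 : F) ≠ 0 := Ring.two_ne_zero hchar
  have h4ne : (4 : F) ≠ 0 := by
    intro h
    have : (2 : F) * 2 = 0 := by rw [← h]; norm_num
    exact h2ne (by rcases mul_eq_zero.mp this with h | h <;> exact h)
  have h2ns : ¬ IsSquare (2 : F) := by
    rw [FiniteField.isSquare_two_iff, hq]
    omega
  have hdiv : Fintype.card F / 2 = (q - 1) / 2 := by rw [hq]; omega
  have hodd : Odd ((q - 1) / 2) := by
    rw [Nat.odd_iff]; omega
  have key : ∀ x : F, x ≠ 0 → x ^ ((q-1)/2) = 1 ∨ x ^ ((q-1)/2) = -1 := by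
    intro x hx
    rw [← hdiv]
    exact FiniteField.pow_dichotomy hchar hx
  rw [Finite.injective_iff_bijective.symm]
  intro x y hxy
  simp only at hxy
  -- f x = 0 iff x = 0
  by_cases hx : x = 0
  · subst hx
    by_contra hy
    have hne : y ≠ 0 := fun h => hy h.symm
    have hL : (0:F) ^ 2 * ((0:F) ^ ((q-1)/2) + 3) = 0 := by ring
    rw [hL] at hxy
    rcases key y hne with h | h <;> rw [h] at hxy
    · exact h4ne (by
        rcases mul_eq_zero.mp hxy.symm with h'|h'
        · exact absurd h' (pow_ne_zero 2 hne)
        · linear_combination h')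
    · exact h2ne (by
        rcases mul_eq_zero.mp hxy.symm with h'|h'
        · exact absurd h' (pow_ne_zero 2 hne)
        · linear_combination h')
  by_cases hy : y = 0
  · subst hy
    exfalso
    have hR : (0:F) ^ 2 * ((0:F) ^ ((q-1)/2) + 3) = 0 := by ring
    rw [hR] at hxy
    rcases key x hx with h | h <;> rw [h] at hxy <;>
      rcases mul_eq_zero.mp hxy with h'|h'
    · exact pow_ne_zero 2 hx h'
    · exact h4ne (by linear_combination h')
    · exact pow_ne_zero 2 hx h'
    · exact h2ne (by linear_combination h')
  -- both nonzero
  have hneg : ∀ z : F, z ≠ 0 → (-z) ^ ((q-1)/2) = - z ^ ((q-1)/2) := by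
    intro z _; rw [neg_pow, Odd.neg_one_pow hodd, neg_one_mul]
  rcases key x hx with hεx | hεx <;> rcases key y hy with hεy | hεy <;>
      rw [hεx, hεy] at hxy
  · -- both 1: 4x² = 4y²
    have hsq : x ^ 2 = y ^ 2 := by
      have h4 : (4:F) * x^2 = 4 * y^2 := by linear_combination hxy
      exact mul_left_cancel₀ h4ne h4
    rcases sq_eq_sq_iff_eq_or_eq_neg.mp hsq with h | h
    · exact h
    · exfalso
      rw [h, hneg y hy, hεy] at hεx
      have : (2:F) = 0 := by linear_combination -hεx
      exact h2ne this
  · -- x square, y nonsquare: 4x² = 2y², so 2 = (y/x)²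
    exfalso
    apply h2ns
    have hsq2 : y ^ 2 = 2 * x ^ 2 := by
      refine mul_left_cancel₀ h2ne ?_
      linear_combination -hxy
    refine ⟨y / x, ?_⟩
    field_simp
    linear_combination -hsq2
  · exfalso
    apply h2ns
    have hsq2 : x ^ 2 = 2 * y ^ 2 := by
      refine mul_left_cancel₀ h2ne ?_
      linear_combination hxy
    refine ⟨x / y, ?_⟩
    field_simp
    linear_combination -hsq2
  · have hsq : x ^ 2 = y ^ 2 := by
      have : (2:F) * x^2 = 2 * y^2 := by linear_combination hxy
      exact mul_left_cancel₀ h2ne this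
    rcases sq_eq_sq_iff_eq_or_eq_neg.mp hsq with h | h
    · exact h
    · exfalso
      rw [h, hneg y hy, hεy] at hεx
      have : (2:F) = 0 := by linear_combination hεx
      exact h2ne this
end

section
/- Let q ≡ 3 (mod 8) be a prime power and let η(x) = x^((q-1)/2) be the quadratic character of F_q (with η(0)=0). Then the function f(x) = x^2(η(x) + 3) has differential uniformity at most 4: for every nonzero a in F_q and every c in F_q, the equation f(x+a) - f(x) = c has at most 4 solutions x in F_q. -/
theorem wan_lidl_b3_du_le_four
    (F : Type*) [Field F] [Fintype F] [DecidableEq F]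
    (q : ℕ) (hq : Fintype.card F = q) (hq3 : q % 8 = 3)
    (f : F → F) (hf : ∀ x : F, f x = x ^ 2 * (x ^ ((q - 1) / 2) + 3))
    (a : F) (ha : a ≠ 0) (c : F) :
    (Finset.univ.filter (fun x : F => f (x + a) - f x = c)).card ≤ 4 := by
  classical
  obtain ⟨k, hk⟩ : ∃ k, q = 8 * k + 3 := ⟨q / 8, by omega⟩
  have hchar2 : ringChar F ≠ 2 := by
    intro h
    have := FiniteField.even_card_of_char_two (F := F) h
    omega
  have h2 : (2 : F) ≠ 0 := Ring.two_ne_zero hchar2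
  set m : ℕ := (q - 1) / 2 with hm
  have hmodd : Odd m := ⟨2 * k, by omega⟩
  have h2m : 2 * m = q - 1 := by omega
  have hpow : ∀ x : F, x ≠ 0 → x ^ m * x ^ m = 1 := by
    intro x hx
    rw [← pow_add]
    have : m + m = q - 1 := by omega
    rw [this, ← hq]
    exact FiniteField.pow_card_sub_one_eq_one x hx
  have hpm : ∀ x : F, x ≠ 0 → x ^ m = 1 ∨ x ^ m = -1 := fun x hx =>
    mul_self_eq_one_iff.mp (hpow x hx)
  have hχ0 : (0 : F) ^ m = 0 := zero_pow (by omega)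
  have hsqm : ∀ x : F, x ≠ 0 → (x ^ 2) ^ m = 1 := by
    intro x hx
    rw [← pow_mul, mul_comm 2 m, pow_mul, pow_two, hpow x hx]
  have h1m1 : (1 : F) ≠ -1 := by
    intro h; apply h2; linear_combination h
  have hne1 : ∀ x : F, x ^ m = 1 → x ≠ 0 := by
    intro x h hx; rw [hx, hχ0] at h; exact one_ne_zero h.symm
  have hnem1 : ∀ x : F, x ^ m = -1 → x ≠ 0 := by
    intro x h hx; rw [hx, hχ0] at h
    exact h2 (by linear_combination 2 * h)
  have hχm1 : (-1 : F) ^ m = -1 := hmodd.neg_one_pow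
  have hχ2 : (2 : F) ^ m = -1 := by
    have hns : ¬ IsSquare (2 : F) := by
      rw [FiniteField.isSquare_two_iff, hq, hq3]
      simp
    rcases hpm 2 h2 with h | h
    · exfalso
      apply hns
      rw [FiniteField.isSquare_iff hchar2 h2, hq]
      have : q / 2 = m := by omega
      rw [this, h]
    · exact h
  have hχ4 : (4 : F) ^ m = 1 := by
    rw [show (4 : F) = 2 * 2 by norm_num, mul_pow, hχ2]; ring
  have hχ8 : (8 : F) ^ m = -1 := by
    rw [show (8 : F) = 2 * 4 by norm_num, mul_pow, hχ2, hχ4]; ring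
  have hχm2 : (-2 : F) ^ m = 1 := by
    rw [show (-2 : F) = -1 * 2 by norm_num, mul_pow, hχ2, hχm1]; ring
  set S : Finset F := Finset.univ.filter (fun x : F => f (x + a) - f x = c) with hS
  have hSmem : ∀ x : F, x ∈ S ↔ f (x + a) - f x = c := by
    intro x; simp [hS]
  set SA : Finset F := S.filter (fun x => x ^ m = 1 ∧ (x + a) ^ m = 1) with hSA
  set SB : Finset F := S.filter (fun x => x ^ m = -1 ∧ (x + a) ^ m = -1) with hSB
  set SC : Finset F := S.filter (fun x => x ^ m = 1 ∧ (x + a) ^ m = -1) with hSC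
  set SD : Finset F := S.filter (fun x => x ^ m = -1 ∧ (x + a) ^ m = 1) with hSD
  set SO : Finset F := S.filter (fun x => x = 0) with hSO
  set SE : Finset F := S.filter (fun x => x = -a) with hSE
  -- class equations
  have hEqA : ∀ x ∈ SA, 8 * a * x = c - 4 * a ^ 2 := by
    intro x hx
    obtain ⟨hxS, h1, h2⟩ := Finset.mem_filter.mp hx
    have hP := (hSmem x).mp hxS
    rw [hf, hf, h1, h2] at hP
    linear_combination hP
  have hEqB : ∀ x ∈ SB, 4 * a * x = c - 2 * a ^ 2 := by
    intro x hx
    obtain ⟨hxS, h1, h2⟩ := Finset.mem_filter.mp hx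
    have hP := (hSmem x).mp hxS
    rw [hf, hf, h1, h2] at hP
    linear_combination hP
  have hEqC : ∀ x ∈ SC, 2 * (x - a) ^ 2 = 4 * a ^ 2 - c := by
    intro x hx
    obtain ⟨hxS, h1, h2⟩ := Finset.mem_filter.mp hx
    have hP := (hSmem x).mp hxS
    rw [hf, hf, h1, h2] at hP
    linear_combination -hP
  have hEqD : ∀ x ∈ SD, 2 * (x + 2 * a) ^ 2 = 4 * a ^ 2 + c := by
    intro x hx
    obtain ⟨hxS, h1, h2⟩ := Finset.mem_filter.mp hx
    have hP := (hSmem x).mp hxS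
    rw [hf, hf, h1, h2] at hP
    linear_combination hP
  have hsgnA : ∀ x ∈ SA, x ^ m = 1 ∧ (x + a) ^ m = 1 := by
    intro x hx; exact (Finset.mem_filter.mp hx).2
  have hsgnB : ∀ x ∈ SB, x ^ m = -1 ∧ (x + a) ^ m = -1 := by
    intro x hx; exact (Finset.mem_filter.mp hx).2
  have hsgnC : ∀ x ∈ SC, x ^ m = 1 ∧ (x + a) ^ m = -1 := by
    intro x hx; exact (Finset.mem_filter.mp hx).2
  have hsgnD : ∀ x ∈ SD, x ^ m = -1 ∧ (x + a) ^ m = 1 := by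
    intro x hx; exact (Finset.mem_filter.mp hx).2
  have hO : SO.Nonempty → c = a ^ 2 * (a ^ m + 3) := by
    rintro ⟨x, hx⟩
    obtain ⟨hxS, h0⟩ := Finset.mem_filter.mp hx
    subst h0
    have hP := (hSmem 0).mp hxS
    rw [zero_add, hf, hf, hχ0] at hP
    linear_combination -hP
  have hnegam : (-a : F) ^ m = -(a ^ m) := by
    rw [show (-a : F) = -1 * a by ring, mul_pow, hχm1]; ring
  have hE : SE.Nonempty → c = a ^ 2 * (a ^ m - 3) := by
    rintro ⟨x, hx⟩
    obtain ⟨hxS, h0⟩ := Finset.mem_filter.mp hx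
    subst h0
    have hP := (hSmem (-a)).mp hxS
    rw [neg_add_cancel, hf, hf, hχ0, hnegam] at hP
    linear_combination -hP
  -- cardinality caps
  have h8 : (8 : F) ≠ 0 := by
    intro h; apply h2
    have : (2:F) ^ 3 = 0 := by rw [show (2:F)^3 = 8 by norm_num, h]
    exact pow_eq_zero_iff (by norm_num) |>.mp this
  have h4 : (4 : F) ≠ 0 := by
    intro h; apply h2
    have : (2:F) ^ 2 = 0 := by rw [show (2:F)^2 = 4 by norm_num, h]
    exact pow_eq_zero_iff (by norm_num) |>.mp this
  have hcardA : SA.card ≤ 1 := by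
    refine Finset.card_le_one.mpr ?_
    intro x hx y hy
    have e1 := hEqA x hx
    have e2 := hEqA y hy
    have h8a : (8 : F) * a ≠ 0 := mul_ne_zero h8 ha
    exact mul_left_cancel₀ h8a (by rw [e1, e2])
  have hcardB : SB.card ≤ 1 := by
    refine Finset.card_le_one.mpr ?_
    intro x hx y hy
    have e1 := hEqB x hx
    have e2 := hEqB y hy
    have h4a : (4 : F) * a ≠ 0 := mul_ne_zero h4 ha
    exact mul_left_cancel₀ h4a (by rw [e1, e2])
  have hcardO : SO.card ≤ 1 := by
    refine Finset.card_le_one.mpr ?_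
    intro x hx y hy
    rw [(Finset.mem_filter.mp hx).2, (Finset.mem_filter.mp hy).2]
  have hcardE : SE.card ≤ 1 := by
    refine Finset.card_le_one.mpr ?_
    intro x hx y hy
    rw [(Finset.mem_filter.mp hx).2, (Finset.mem_filter.mp hy).2]
  have hCquad : ∀ x ∈ SC, ∀ y ∈ SC, y = x ∨ y = 2 * a - x := by
    intro x hx y hy
    have e1 := hEqC x hx
    have e2 := hEqC y hy
    have h0 : 2 * ((y - x) * (y + x - 2 * a)) = 0 := by linear_combination e2 - e1
    rcases mul_eq_zero.mp h0 with h | h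
    · exact absurd h h2
    rcases mul_eq_zero.mp h with h | h
    · left; linear_combination h
    · right; linear_combination h
  have hDquad : ∀ x ∈ SD, ∀ y ∈ SD, y = x ∨ y = -(4 * a) - x := by
    intro x hx y hy
    have e1 := hEqD x hx
    have e2 := hEqD y hy
    have h0 : 2 * ((y - x) * (y + x + 4 * a)) = 0 := by linear_combination e2 - e1
    rcases mul_eq_zero.mp h0 with h | h
    · exact absurd h h2
    rcases mul_eq_zero.mp h with h | h
    · left; linear_combination h
    · right; linear_combination h
  have hcardC : SC.card ≤ 2 := by
    by_cases hne : SC.Nonempty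
    · obtain ⟨x₀, hx₀⟩ := hne
      have hsub : SC ⊆ {x₀, 2 * a - x₀} := by
        intro x hx
        rcases hCquad x₀ hx₀ x hx with h | h <;> simp [h]
      exact le_trans (Finset.card_le_card hsub)
        (le_trans (Finset.card_insert_le _ _) (by simp))
    · rw [Finset.not_nonempty_iff_eq_empty.mp hne]; simp
  have hcardD : SD.card ≤ 2 := by
    by_cases hne : SD.Nonempty
    · obtain ⟨x₀, hx₀⟩ := hne
      have hsub : SD ⊆ {x₀, -(4 * a) - x₀} := by
        intro x hx
        rcases hDquad x₀ hx₀ x hx with h | h <;> simp [h]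
      exact le_trans (Finset.card_le_card hsub)
        (le_trans (Finset.card_insert_le _ _) (by simp))
    · rw [Finset.not_nonempty_iff_eq_empty.mp hne]; simp
  -- covering
  have hsub : S ⊆ ((((SA ∪ SB) ∪ SC) ∪ SD) ∪ SO) ∪ SE := by
    intro x hx
    simp only [Finset.mem_union]
    by_cases h0 : x = 0
    · exact Or.inl (Or.inr (Finset.mem_filter.mpr ⟨hx, h0⟩))
    by_cases hxa : x + a = 0
    · exact Or.inr (Finset.mem_filter.mpr ⟨hx, by linear_combination hxa⟩)
    rcases hpm x h0 with hx1 | hx1 <;> rcases hpm (x + a) hxa with hx2 | hx2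
    · exact Or.inl (Or.inl (Or.inl (Or.inl (Or.inl (Finset.mem_filter.mpr ⟨hx, hx1, hx2⟩)))))
    · exact Or.inl (Or.inl (Or.inl (Or.inr (Finset.mem_filter.mpr ⟨hx, hx1, hx2⟩))))
    · exact Or.inl (Or.inl (Or.inr (Finset.mem_filter.mpr ⟨hx, hx1, hx2⟩)))
    · exact Or.inl (Or.inl (Or.inl (Or.inl (Or.inr (Finset.mem_filter.mpr ⟨hx, hx1, hx2⟩)))))
  have hsum : S.card ≤ SA.card + SB.card + SC.card + SD.card + SO.card + SE.card := by
    have t0 := Finset.card_le_card hsub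
    have t1 := Finset.card_union_le ((((SA ∪ SB) ∪ SC) ∪ SD) ∪ SO) SE
    have t2 := Finset.card_union_le (((SA ∪ SB) ∪ SC) ∪ SD) SO
    have t3 := Finset.card_union_le ((SA ∪ SB) ∪ SC) SD
    have t4 := Finset.card_union_le (SA ∪ SB) SC
    have t5 := Finset.card_union_le SA SB
    omega
  have hpowEq : ∀ u v : F, u = v → u ^ m = v ^ m := fun u v h => by rw [h]
  -- K1 : A and C nonempty -> a^m = -1
  have K1 : SA.Nonempty → SC.Nonempty → a ^ m = -1 := by
    rintro ⟨z, hz⟩ ⟨x, hx⟩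
    obtain ⟨hz1, hz2⟩ := hsgnA z hz
    obtain ⟨hx1, hx2⟩ := hsgnC x hx
    have key : 8 * (a * z) = -2 * (x - a) ^ 2 := by
      linear_combination (hEqA z hz) + (hEqC x hx)
    have hxa : x - a ≠ 0 := by
      intro h0
      rw [h0] at key
      have h00 : (8 : F) * (a * z) = 0 := by rw [key]; ring
      rcases mul_eq_zero.mp h00 with h' | h'
      · exact h8 h'
      rcases mul_eq_zero.mp h' with h' | h'
      · exact ha h'
      · exact hne1 z hz1 h'
    have hp := hpowEq _ _ key
    rw [mul_pow, mul_pow, mul_pow, hχ8, hχm2, hz1, hsqm (x - a) hxa] at hp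
    linear_combination -hp
  -- K2 : A and D nonempty -> a^m = 1
  have K2 : SA.Nonempty → SD.Nonempty → a ^ m = 1 := by
    rintro ⟨z, hz⟩ ⟨y, hy⟩
    obtain ⟨hz1, hz2⟩ := hsgnA z hz
    obtain ⟨hy1, hy2⟩ := hsgnD y hy
    have key : 8 * (a * (z + a)) = 2 * (y + 2 * a) ^ 2 := by
      linear_combination (hEqA z hz) - (hEqD y hy)
    have hya : y + 2 * a ≠ 0 := by
      intro h0
      rw [h0] at key
      have h00 : (8 : F) * (a * (z + a)) = 0 := by rw [key]; ring
      rcases mul_eq_zero.mp h00 with h' | h'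
      · exact h8 h'
      rcases mul_eq_zero.mp h' with h' | h'
      · exact ha h'
      · exact hne1 (z + a) hz2 h'
    have hp := hpowEq _ _ key
    rw [mul_pow, mul_pow, mul_pow, hχ8, hχ2, hz2, hsqm (y + 2 * a) hya] at hp
    linear_combination -hp
  -- K3 : A nonempty and two elements in C -> a^m = 1
  have K3 : SA.Nonempty → 2 ≤ SC.card → a ^ m = 1 := by
    rintro ⟨z, hz⟩ hcc
    obtain ⟨x, hx, x', hx', hxx⟩ := (Finset.one_lt_card (s := SC)).mp (by omega)
    have hxp2 : x' = 2 * a - x := by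
      rcases hCquad x hx x' hx' with h | h
      · exact absurd h.symm hxx
      · exact h
    subst hxp2
    obtain ⟨hz1, hz2⟩ := hsgnA z hz
    obtain ⟨hx1, hx2⟩ := hsgnC x hx
    obtain ⟨hy1, hy2⟩ := hsgnC (2 * a - x) hx'
    have key : 8 * (a * (z + a)) = 2 * ((x + a) * (2 * a - x + a)) := by
      linear_combination (hEqA z hz) + (hEqC x hx)
    have hp := hpowEq _ _ key
    rw [mul_pow, mul_pow, mul_pow, mul_pow, hχ8, hχ2, hz2, hx2, hy2] at hp
    linear_combination -hp
  -- K4 : A nonempty and two elements in D -> a^m = -1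
  have K4 : SA.Nonempty → 2 ≤ SD.card → a ^ m = -1 := by
    rintro ⟨z, hz⟩ hcc
    obtain ⟨y, hy, y', hy', hyy⟩ := (Finset.one_lt_card (s := SD)).mp (by omega)
    have hyp2 : y' = -(4 * a) - y := by
      rcases hDquad y hy y' hy' with h | h
      · exact absurd h.symm hyy
      · exact h
    subst hyp2
    obtain ⟨hz1, hz2⟩ := hsgnA z hz
    obtain ⟨ha1, ha2⟩ := hsgnD y hy
    obtain ⟨hb1, hb2⟩ := hsgnD (-(4 * a) - y) hy'
    have key : 8 * (a * z) = -2 * (y * (-(4 * a) - y)) := by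
      linear_combination (hEqA z hz) - (hEqD y hy)
    have hp := hpowEq _ _ key
    rw [mul_pow, mul_pow, mul_pow, mul_pow, hχ8, hχm2, hz1, ha1, hb1] at hp
    linear_combination -hp
  -- K5 : B nonempty and two elements in C -> a^m = 1
  have K5 : SB.Nonempty → 2 ≤ SC.card → a ^ m = 1 := by
    rintro ⟨z, hz⟩ hcc
    obtain ⟨x, hx, x', hx', hxx⟩ := (Finset.one_lt_card (s := SC)).mp (by omega)
    have hxp2 : x' = 2 * a - x := by
      rcases hCquad x hx x' hx' with h | h
      · exact absurd h.symm hxx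
      · exact h
    subst hxp2
    obtain ⟨hz1, hz2⟩ := hsgnB z hz
    obtain ⟨hx1, hx2⟩ := hsgnC x hx
    obtain ⟨hy1, hy2⟩ := hsgnC (2 * a - x) hx'
    have key : 4 * (a * z) = 2 * (x * (2 * a - x)) := by
      linear_combination (hEqB z hz) + (hEqC x hx)
    have hp := hpowEq _ _ key
    rw [mul_pow, mul_pow, mul_pow, mul_pow, hχ4, hχ2, hz1, hx1, hy1] at hp
    linear_combination -hp
  -- K6 : B nonempty and two elements in D -> a^m = -1
  have K6 : SB.Nonempty → 2 ≤ SD.card → a ^ m = -1 := by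
    rintro ⟨z, hz⟩ hcc
    obtain ⟨y, hy, y', hy', hyy⟩ := (Finset.one_lt_card (s := SD)).mp (by omega)
    have hyp2 : y' = -(4 * a) - y := by
      rcases hDquad y hy y' hy' with h | h
      · exact absurd h.symm hyy
      · exact h
    subst hyp2
    obtain ⟨hz1, hz2⟩ := hsgnB z hz
    obtain ⟨ha1, ha2⟩ := hsgnD y hy
    obtain ⟨hb1, hb2⟩ := hsgnD (-(4 * a) - y) hy'
    have key : 4 * (a * (z + a)) = -2 * ((y + a) * (-(4 * a) - y + a)) := by
      linear_combination (hEqB z hz) - (hEqD y hy)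
    have hp := hpowEq _ _ key
    rw [mul_pow, mul_pow, mul_pow, mul_pow, hχ4, hχm2, hz2, ha2, hb2] at hp
    linear_combination -hp
  -- helpers
  have hcard0 : ∀ s : Finset F, ¬ s.Nonempty → s.card = 0 := fun s h => by
    rw [Finset.not_nonempty_iff_eq_empty.mp h]; simp
  have hval1 : ∀ (s : Finset F) (v : F), (∀ x ∈ s, x = v) → s.card ≤ 1 := fun s v h =>
    Finset.card_le_one.mpr (fun x hx y hy => by rw [h x hx, h y hy])
  have ha2 : a ^ 2 ≠ 0 := pow_ne_zero 2 ha
  -- lemmas in presence of the solution x = 0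
  have KO1A : SO.Nonempty → a ^ m = 1 → SA.card = 0 := by
    intro hOne hT1
    have hc := hO hOne
    apply hcard0
    rintro ⟨z, hz⟩
    obtain ⟨hz1, hz2⟩ := hsgnA z hz
    have h00 : 8 * (a * z) = 0 := by
      linear_combination (hEqA z hz) + hc + a ^ 2 * hT1
    rcases mul_eq_zero.mp h00 with h' | h'
    · exact h8 h'
    rcases mul_eq_zero.mp h' with h' | h'
    · exact ha h'
    · exact hne1 z hz1 h'
  have KO1Cv : SO.Nonempty → a ^ m = 1 → ∀ x ∈ SC, x = a := by
    intro hOne hT1 x hx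
    have hc := hO hOne
    have h00 : 2 * ((x - a) ^ 2) = 0 := by
      linear_combination (hEqC x hx) - hc - a ^ 2 * hT1
    rcases mul_eq_zero.mp h00 with h' | h'
    · exact absurd h' h2
    · have := pow_eq_zero_iff (n := 2) (by norm_num) |>.mp h'
      linear_combination this
  have KO1Dv : SO.Nonempty → a ^ m = 1 → ∀ y ∈ SD, y = -(4 * a) := by
    intro hOne hT1 y hy
    obtain ⟨hy1, hy2⟩ := hsgnD y hy
    have hc := hO hOne
    have h00 : 2 * (y * (y + 4 * a)) = 0 := by
      linear_combination (hEqD y hy) + hc + a ^ 2 * hT1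
    rcases mul_eq_zero.mp h00 with h' | h'
    · exact absurd h' h2
    rcases mul_eq_zero.mp h' with h' | h'
    · exact absurd h' (hnem1 y hy1)
    · linear_combination h'
  have KO2B : SO.Nonempty → a ^ m = -1 → SB.card = 0 := by
    intro hOne hTm
    have hc := hO hOne
    apply hcard0
    rintro ⟨z, hz⟩
    obtain ⟨hz1, hz2⟩ := hsgnB z hz
    have h00 : 4 * (a * z) = 0 := by
      linear_combination (hEqB z hz) + hc + a ^ 2 * hTm
    rcases mul_eq_zero.mp h00 with h' | h'
    · exact h4 h'
    rcases mul_eq_zero.mp h' with h' | h'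
    · exact ha h'
    · exact hnem1 z hz1 h'
  have KO2Cv : SO.Nonempty → a ^ m = -1 → ∀ x ∈ SC, x = 2 * a := by
    intro hOne hTm x hx
    obtain ⟨hx1, hx2⟩ := hsgnC x hx
    have hc := hO hOne
    have h00 : 2 * (x * (x - 2 * a)) = 0 := by
      linear_combination (hEqC x hx) - hc - a ^ 2 * hTm
    rcases mul_eq_zero.mp h00 with h' | h'
    · exact absurd h' h2
    rcases mul_eq_zero.mp h' with h' | h'
    · exact absurd h' (hne1 x hx1)
    · linear_combination h'
  -- lemmas in presence of the solution x = -a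
  have KE1A : SE.Nonempty → a ^ m = -1 → SA.card = 0 := by
    intro hEne hTm
    have hc := hE hEne
    apply hcard0
    rintro ⟨z, hz⟩
    obtain ⟨hz1, hz2⟩ := hsgnA z hz
    have h00 : 8 * (a * (z + a)) = 0 := by
      linear_combination (hEqA z hz) + hc + a ^ 2 * hTm
    rcases mul_eq_zero.mp h00 with h' | h'
    · exact h8 h'
    rcases mul_eq_zero.mp h' with h' | h'
    · exact ha h'
    · exact hne1 (z + a) hz2 h'
  have KE1Cv : SE.Nonempty → a ^ m = -1 → ∀ x ∈ SC, x = 3 * a := by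
    intro hEne hTm x hx
    obtain ⟨hx1, hx2⟩ := hsgnC x hx
    have hc := hE hEne
    have h00 : 2 * ((x - 3 * a) * (x + a)) = 0 := by
      linear_combination (hEqC x hx) - hc - a ^ 2 * hTm
    rcases mul_eq_zero.mp h00 with h' | h'
    · exact absurd h' h2
    rcases mul_eq_zero.mp h' with h' | h'
    · linear_combination h'
    · exact absurd h' (hnem1 (x + a) hx2)
  have KE1Dv : SE.Nonempty → a ^ m = -1 → ∀ y ∈ SD, y = -(2 * a) := by
    intro hEne hTm y hy
    have hc := hE hEne
    have h00 : 2 * ((y + 2 * a) ^ 2) = 0 := by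
      linear_combination (hEqD y hy) + hc + a ^ 2 * hTm
    rcases mul_eq_zero.mp h00 with h' | h'
    · exact absurd h' h2
    · have := pow_eq_zero_iff (n := 2) (by norm_num) |>.mp h'
      linear_combination this
  have KE2B : SE.Nonempty → a ^ m = 1 → SB.card = 0 := by
    intro hEne hT1
    have hc := hE hEne
    apply hcard0
    rintro ⟨z, hz⟩
    obtain ⟨hz1, hz2⟩ := hsgnB z hz
    have h00 : 4 * (a * (z + a)) = 0 := by
      linear_combination (hEqB z hz) + hc + a ^ 2 * hT1
    rcases mul_eq_zero.mp h00 with h' | h'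
    · exact h4 h'
    rcases mul_eq_zero.mp h' with h' | h'
    · exact ha h'
    · exact hnem1 (z + a) hz2 h'
  have KE2Dv : SE.Nonempty → a ^ m = 1 → ∀ y ∈ SD, y = -(3 * a) := by
    intro hEne hT1 y hy
    obtain ⟨hy1, hy2⟩ := hsgnD y hy
    have hc := hE hEne
    have h00 : 2 * ((y + a) * (y + 3 * a)) = 0 := by
      linear_combination (hEqD y hy) + hc + a ^ 2 * hT1
    rcases mul_eq_zero.mp h00 with h' | h'
    · exact absurd h' h2
    rcases mul_eq_zero.mp h' with h' | h'
    · exact absurd h' (hne1 (y + a) hy2)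
    · linear_combination h'
  have K11 : SO.Nonempty → SE.Nonempty → (3 : F) = 0 := by
    intro hOne hEne
    have h6 : (2 : F) * 3 * a ^ 2 = 0 := by
      linear_combination (hE hEne) - (hO hOne)
    rcases mul_eq_zero.mp h6 with h' | h'
    · rcases mul_eq_zero.mp h' with h'' | h''
      · exact absurd h'' h2
      · exact h''
    · exact absurd h' ha2
  have K13C : SO.Nonempty → SE.Nonempty → a ^ m = -1 → SC.card = 0 := by
    intro hOne hEne hTm
    have h3 := K11 hOne hEne
    apply hcard0
    rintro ⟨x, hx⟩
    obtain ⟨hx1, hx2⟩ := hsgnC x hx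
    have hxv := KO2Cv hOne hTm x hx
    have h0 : x + a = 0 := by rw [hxv]; linear_combination a * h3
    exact hnem1 (x + a) hx2 h0
  have K13Dv : SO.Nonempty → SE.Nonempty → a ^ m = -1 → ∀ y ∈ SD, y = -(2 * a) := by
    intro hOne hEne hTm y hy
    have h3 := K11 hOne hEne
    have hc := hO hOne
    have h00 : 2 * ((y + 2 * a) ^ 2) = 0 := by
      linear_combination (hEqD y hy) + hc + a ^ 2 * hTm + 2 * a ^ 2 * h3
    rcases mul_eq_zero.mp h00 with h' | h'
    · exact absurd h' h2
    · have := pow_eq_zero_iff (n := 2) (by norm_num) |>.mp h'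
      linear_combination this
  -- final case analysis
  rw [← hS] at *
  by_cases hAne : SA.Nonempty
  · by_cases hOne : SO.Nonempty
    · -- case A and O
      have hTm : a ^ m = -1 := by
        rcases hpm a ha with h | h
        · have h0 := KO1A hOne h
          have := Finset.card_pos.mpr hAne
          omega
        · exact h
      obtain ⟨z, hz⟩ := hAne
      obtain ⟨hz1, hz2⟩ := hsgnA z hz
      have hc := hO hOne
      have key : 8 * (a * (z + a)) = 2 * 3 * a ^ 2 := by
        linear_combination (hEqA z hz) + hc + a ^ 2 * hTm
      have hp := hpowEq _ _ key
      rw [mul_pow, mul_pow, mul_pow, mul_pow, hχ8, hχ2, hz2, hTm, hsqm a ha] at hp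
      have h3m : (3 : F) ^ m = -1 := by linear_combination hp
      have h30 : (3 : F) ≠ 0 := hnem1 3 h3m
      have hC0 : SC.card = 0 := by
        apply hcard0
        rintro ⟨x, hx⟩
        obtain ⟨hx1, hx2⟩ := hsgnC x hx
        have hxv := KO2Cv hOne hTm x hx
        have hxa : x + a = 3 * a := by rw [hxv]; ring
        rw [hxa, mul_pow, h3m, hTm] at hx2
        exact h1m1 (by linear_combination hx2)
      have hD0 : SD.card = 0 := by
        apply hcard0
        rintro ⟨y, hy⟩
        have h2t : 2 * ((y + 2 * a) ^ 2) = 2 * (3 * a ^ 2) := by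
          linear_combination (hEqD y hy) + hc + a ^ 2 * hTm
        have ht2 : (y + 2 * a) ^ 2 = 3 * a ^ 2 := mul_left_cancel₀ h2 h2t
        have hyne : y + 2 * a ≠ 0 := by
          intro h0
          have h30' : (3 : F) * a ^ 2 = 0 := by rw [← ht2, h0]; ring
          rcases mul_eq_zero.mp h30' with h' | h'
          · exact h30 h'
          · exact ha2 h'
        have hp2 := hpowEq _ _ ht2
        rw [hsqm _ hyne, mul_pow, h3m, hsqm a ha] at hp2
        exact h1m1 (by linear_combination hp2)
      have hE0 : SE.card = 0 := by
        apply hcard0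
        intro hEne
        exact h30 (K11 hOne hEne)
      omega
    · by_cases hEne : SE.Nonempty
      · -- case A and E
        have hT1 : a ^ m = 1 := by
          rcases hpm a ha with h | h
          · exact h
          · have h0 := KE1A hEne h
            have := Finset.card_pos.mpr hAne
            omega
        obtain ⟨z, hz⟩ := hAne
        obtain ⟨hz1, hz2⟩ := hsgnA z hz
        have hc := hE hEne
        have key : 8 * (a * z) = -2 * (3 * a ^ 2) := by
          linear_combination (hEqA z hz) + hc + a ^ 2 * hT1
        have hp := hpowEq _ _ key
        rw [mul_pow, mul_pow, mul_pow, mul_pow, hχ8, hχm2, hz1, hT1, hsqm a ha] at hp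
        have h3m : (3 : F) ^ m = -1 := by linear_combination -hp
        have h30 : (3 : F) ≠ 0 := hnem1 3 h3m
        have hC0 : SC.card = 0 := by
          apply hcard0
          rintro ⟨x, hx⟩
          have h2t : 2 * ((x - a) ^ 2) = 2 * (3 * a ^ 2) := by
            linear_combination (hEqC x hx) - hc - a ^ 2 * hT1
          have ht2 : (x - a) ^ 2 = 3 * a ^ 2 := mul_left_cancel₀ h2 h2t
          have hxne : x - a ≠ 0 := by
            intro h0
            have h30' : (3 : F) * a ^ 2 = 0 := by rw [← ht2, h0]; ring
            rcases mul_eq_zero.mp h30' with h' | h'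
            · exact h30 h'
            · exact ha2 h'
          have hp2 := hpowEq _ _ ht2
          rw [hsqm _ hxne, mul_pow, h3m, hsqm a ha] at hp2
          exact h1m1 (by linear_combination hp2)
        have hD0 : SD.card = 0 := by
          apply hcard0
          rintro ⟨y, hy⟩
          obtain ⟨hy1, hy2⟩ := hsgnD y hy
          have hyv := KE2Dv hEne hT1 y hy
          rw [hyv, show (-(3 * a) : F) = -1 * (3 * a) by ring, mul_pow, mul_pow,
            hχm1, h3m, hT1] at hy1
          exact h1m1 (by linear_combination hy1)
        have hO0 : SO.card = 0 := hcard0 _ hOne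
        omega
      · -- case A alone
        have hO0 : SO.card = 0 := hcard0 _ hOne
        have hE0 : SE.card = 0 := hcard0 _ hEne
        by_cases hCne : SC.Nonempty
        · have hTm := K1 hAne hCne
          have hC1 : SC.card ≤ 1 := by
            by_contra hcc
            push_neg at hcc
            have h1' := K3 hAne (by omega)
            exact h1m1 (by linear_combination hTm - h1')
          have hD0 : SD.card = 0 := by
            apply hcard0
            intro hDne
            have h1' := K2 hAne hDne
            exact h1m1 (by linear_combination hTm - h1')
          omega
        · have hC0 : SC.card = 0 := hcard0 _ hCne
          have hD1 : SD.card ≤ 1 := by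
            by_contra hcc
            push_neg at hcc
            have hm' := K4 hAne (by omega)
            have h1' := K2 hAne (Finset.card_pos.mp (by omega))
            exact h1m1 (by linear_combination hm' - h1')
          omega
  · have hA0 : SA.card = 0 := hcard0 _ hAne
    by_cases hOne : SO.Nonempty
    · rcases hpm a ha with hT1 | hTm
      · -- O present, a square
        have hC1 : SC.card ≤ 1 := hval1 _ _ (KO1Cv hOne hT1)
        have hD1 : SD.card ≤ 1 := hval1 _ _ (KO1Dv hOne hT1)
        by_cases hEne : SE.Nonempty
        · have hB0 := KE2B hEne hT1
          omega
        · have hE0 : SE.card = 0 := hcard0 _ hEne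
          omega
      · -- O present, a nonsquare
        have hB0 := KO2B hOne hTm
        have hC1 : SC.card ≤ 1 := hval1 _ _ (KO2Cv hOne hTm)
        by_cases hEne : SE.Nonempty
        · have hC0 := K13C hOne hEne hTm
          have hD1 : SD.card ≤ 1 := hval1 _ _ (K13Dv hOne hEne hTm)
          omega
        · have hE0 : SE.card = 0 := hcard0 _ hEne
          omega
    · have hO0 : SO.card = 0 := hcard0 _ hOne
      by_cases hEne : SE.Nonempty
      · rcases hpm a ha with hT1 | hTm
        · have hB0 := KE2B hEne hT1
          have hD1 : SD.card ≤ 1 := hval1 _ _ (KE2Dv hEne hT1)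
          omega
        · have hC1 : SC.card ≤ 1 := hval1 _ _ (KE1Cv hEne hTm)
          have hD1 : SD.card ≤ 1 := hval1 _ _ (KE1Dv hEne hTm)
          omega
      · have hE0 : SE.card = 0 := hcard0 _ hEne
        by_cases hBne : SB.Nonempty
        · by_cases hcc : 2 ≤ SC.card
          · have hT1 := K5 hBne hcc
            have hD1 : SD.card ≤ 1 := by
              by_contra h
              push_neg at h
              have hm' := K6 hBne (by omega)
              exact h1m1 (by linear_combination hm' - hT1)
            omega
          · omega
        · have hB0 : SB.card = 0 := hcard0 _ hBne
          omega
end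

section
/- Let q ≡ 3 (mod 8) be a prime power and η the quadratic character of F_q. Then f(x) = x^2(η(x) - 3) is a bijection on F_q with differential uniformity at most 4. -/
theorem wan_lidl_b_neg3_perm_and_du_le_four
    (F : Type*) [Field F] [Fintype F] [DecidableEq F]
    (q : ℕ) (hq : Fintype.card F = q) (hq3 : q % 8 = 3)
    (f : F → F) (hf : ∀ x : F, f x = x ^ 2 * (x ^ ((q - 1) / 2) - 3)) :
    Function.Bijective f ∧
      ∀ a : F, a ≠ 0 → ∀ c : F,
        (Finset.univ.filter (fun x : F => f (x + a) - f x = c)).card ≤ 4 := by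
  classical
  set m := (q - 1) / 2 with hmdef
  have hq2 : Fintype.card F % 2 = 1 := by rw [hq]; omega
  have hchar : ringChar F ≠ 2 := by
    intro h
    have h2 := FiniteField.even_card_iff_char_two.mp h
    omega
  have h2ne : (2 : F) ≠ 0 := Ring.two_ne_zero hchar
  have h1ne : (1 : F) ≠ -1 := by
    intro h; exact h2ne (by linear_combination h)
  have h0ne1 : (0 : F) ≠ 1 := fun h => one_ne_zero h.symm
  have h0nem1 : (0 : F) ≠ -1 := by
    intro h; exact h2ne (by linear_combination 2 * h)
  have h4ne : (4 : F) ≠ 0 := fun h => mul_ne_zero h2ne h2ne (by linear_combination h)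
  have h8ne : (8 : F) ≠ 0 :=
    fun h => mul_ne_zero h2ne (mul_ne_zero h2ne h2ne) (by linear_combination h)
  have hmne : m ≠ 0 := by omega
  have hmm : m + m = q - 1 := by omega
  have hmodd : Odd m := ⟨(q - 3) / 4, by omega⟩
  have hη0 : (0 : F) ^ m = 0 := zero_pow hmne
  have hu : ∀ x : F, x ≠ 0 → x ^ m = 1 ∨ x ^ m = -1 := by
    intro x hx
    refine mul_self_eq_one_iff.mp ?_
    rw [← pow_add, hmm, ← hq]
    exact FiniteField.pow_card_sub_one_eq_one x hx
  have hm1 : (-1 : F) ^ m = -1 := hmodd.neg_one_pow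
  have hη2 : (2 : F) ^ m = -1 := by
    have hns : ¬ IsSquare (2 : F) := by
      rw [FiniteField.isSquare_two_iff, hq, hq3]
      simp
    have hiff := FiniteField.isSquare_iff hchar h2ne
    have hdiv : Fintype.card F / 2 = m := by rw [hq]; omega
    rw [hdiv] at hiff
    rcases hu 2 h2ne with h | h
    · exact absurd (hiff.mpr h) hns
    · exact h
  have hneg2 : (-2 : F) ^ m = 1 := by
    rw [show (-2 : F) = -1 * 2 by ring, mul_pow, hm1, hη2]; ring
  have hneg4 : (-4 : F) ^ m = -1 := by
    rw [show (-4 : F) = -1 * (2 * 2) by ring, mul_pow, mul_pow, hm1, hη2]; ring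
  have h8m : (8 : F) ^ m = -1 := by
    rw [show (8 : F) = 2 * (2 * 2) by norm_num, mul_pow, mul_pow, hη2]; ring
  have hneg8 : (-8 : F) ^ m = 1 := by
    rw [show (-8 : F) = -1 * 8 by ring, mul_pow, hm1, h8m]; ring
  have hnegam : ∀ x : F, (-x) ^ m = -(x ^ m) := by
    intro x; rw [neg_eq_neg_one_mul, mul_pow, hm1]; ring
  have hpow3 : ∀ u v w : F, (u * v * w) ^ m = u ^ m * v ^ m * w ^ m := by
    intro u v w; rw [mul_pow, mul_pow]
  have hsqm : ∀ x : F, x ≠ 0 → (x ^ 2) ^ m = 1 := by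
    intro x hx
    rw [← pow_mul, mul_comm, pow_mul]
    rcases hu x hx with h | h <;> rw [h] <;> ring
  -- injectivity
  have hinj : Function.Injective f := by
    intro x y hxy
    by_cases hx0 : x = 0
    · subst hx0
      by_contra hy0
      have hy0' : y ≠ 0 := fun h => hy0 h.symm
      rw [hf, hf] at hxy
      have h0 : (0:F) ^ 2 * ((0:F) ^ m - 3) = 0 := by rw [hη0]; ring
      rw [h0] at hxy
      rcases hu y hy0' with h | h <;> rw [h] at hxy
      · have : y ^ 2 * (-2 : F) = 0 := by linear_combination -hxy
        rcases mul_eq_zero.mp this with h' | h'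
        · exact hy0' (pow_eq_zero_iff two_ne_zero |>.mp h')
        · exact h2ne (by linear_combination -h')
      · have : y ^ 2 * (-4 : F) = 0 := by linear_combination -hxy
        rcases mul_eq_zero.mp this with h' | h'
        · exact hy0' (pow_eq_zero_iff two_ne_zero |>.mp h')
        · exact h4ne (by linear_combination -h')
    · by_cases hy0 : y = 0
      · subst hy0
        exfalso
        rw [hf, hf] at hxy
        have h0 : (0:F) ^ 2 * ((0:F) ^ m - 3) = 0 := by rw [hη0]; ring
        rw [h0] at hxy
        rcases hu x hx0 with h | h <;> rw [h] at hxy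
        · have : x ^ 2 * (-2 : F) = 0 := by linear_combination hxy
          rcases mul_eq_zero.mp this with h' | h'
          · exact hx0 (pow_eq_zero_iff two_ne_zero |>.mp h')
          · exact h2ne (by linear_combination -h')
        · have : x ^ 2 * (-4 : F) = 0 := by linear_combination hxy
          rcases mul_eq_zero.mp this with h' | h'
          · exact hx0 (pow_eq_zero_iff two_ne_zero |>.mp h')
          · exact h4ne (by linear_combination -h')
      · -- both nonzero
        rw [hf, hf] at hxy
        have hfm : ∀ z : F, z ≠ 0 → (z ^ 2 * (z ^ m - 3)) ^ m = z ^ m := by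
          intro z hz
          rcases hu z hz with h | h <;> rw [h]
          · rw [show z ^ 2 * ((1:F) - 3) = -2 * z ^ 2 by ring, mul_pow, hneg2,
              hsqm z hz]
            ring
          · rw [show z ^ 2 * ((-1:F) - 3) = -4 * z ^ 2 by ring, mul_pow, hneg4,
              hsqm z hz]
            ring
        have hsame : x ^ m = y ^ m := by
          rw [← hfm x hx0, ← hfm y hy0, hxy]
        have hkey : ∀ h' : x + y = 0, False := by
          intro h'
          have hyx : y = -x := by linear_combination h'
          rw [hyx, hnegam] at hsame
          have h2x : (2:F) * x ^ m = 0 := by linear_combination hsame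
          rcases hu x hx0 with h | h <;> rw [h] at h2x
          · exact h2ne (by linear_combination h2x)
          · exact h2ne (by linear_combination -h2x)
        rcases hu x hx0 with h | h
        · rw [h, hsame.symm.trans h] at hxy
          have hsq : (2:F) * ((x - y) * (x + y)) = 0 := by linear_combination -hxy
          rcases mul_eq_zero.mp hsq with h' | h'
          · exact absurd h' h2ne
          rcases mul_eq_zero.mp h' with h'' | h''
          · exact sub_eq_zero.mp h''
          · exact absurd (hkey h'') id
        · rw [h, hsame.symm.trans h] at hxy
          have hsq : (4:F) * ((x - y) * (x + y)) = 0 := by linear_combination -hxy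
          rcases mul_eq_zero.mp hsq with h' | h'
          · exact absurd h' h4ne
          rcases mul_eq_zero.mp h' with h'' | h''
          · exact sub_eq_zero.mp h''
          · exact absurd (hkey h'') id
  refine ⟨Finite.injective_iff_bijective.mp hinj, ?_⟩
  -- differential uniformity part
  intro a ha c
  set S := Finset.univ.filter (fun x : F => f (x + a) - f x = c) with hSdef
  have hmem : ∀ x : F, x ∈ S ↔ f (x + a) - f x = c := by
    intro x; simp [hSdef]
  have hEq : ∀ x ∈ S, (x + a) ^ 2 * ((x + a) ^ m - 3) - x ^ 2 * (x ^ m - 3) = c := by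
    intro x hx
    have := (hmem x).mp hx
    rw [hf, hf] at this
    exact this
  set S1 := S.filter (fun x => x ^ m = 1 ∧ (x + a) ^ m = 1) with hS1def
  set S2 := S.filter (fun x => x ^ m = -1 ∧ (x + a) ^ m = -1) with hS2def
  set S3 := S.filter (fun x => x ^ m = 1 ∧ (x + a) ^ m = -1) with hS3def
  set S4 := S.filter (fun x => x ^ m = -1 ∧ (x + a) ^ m = 1) with hS4def
  set S0 := S.filter (fun x => x = 0 ∨ x + a = 0) with hS0def
  have hcover : S ⊆ ((((S1 ∪ S2) ∪ S3) ∪ S4) ∪ S0) := by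
    intro x hx
    by_cases h0 : x = 0
    · exact Finset.mem_union_right _ (Finset.mem_filter.mpr ⟨hx, Or.inl h0⟩)
    by_cases hxa : x + a = 0
    · exact Finset.mem_union_right _ (Finset.mem_filter.mpr ⟨hx, Or.inr hxa⟩)
    rcases hu x h0 with h1 | h1 <;> rcases hu (x + a) hxa with h2 | h2
    · exact Finset.mem_union_left _ (Finset.mem_union_left _ (Finset.mem_union_left _
        (Finset.mem_union_left _ (Finset.mem_filter.mpr ⟨hx, h1, h2⟩))))
    · exact Finset.mem_union_left _ (Finset.mem_union_left _
        (Finset.mem_union_right _ (Finset.mem_filter.mpr ⟨hx, h1, h2⟩)))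
    · exact Finset.mem_union_left _
        (Finset.mem_union_right _ (Finset.mem_filter.mpr ⟨hx, h1, h2⟩))
    · exact Finset.mem_union_left _ (Finset.mem_union_left _ (Finset.mem_union_left _
        (Finset.mem_union_right _ (Finset.mem_filter.mpr ⟨hx, h1, h2⟩))))
  have hcards : S.card ≤ S1.card + S2.card + S3.card + S4.card + S0.card := by
    have h1 := Finset.card_union_le (((S1 ∪ S2) ∪ S3) ∪ S4) S0
    have h2 := Finset.card_union_le ((S1 ∪ S2) ∪ S3) S4
    have h3 := Finset.card_union_le (S1 ∪ S2) S3
    have h4 := Finset.card_union_le S1 S2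
    have h5 := Finset.card_le_card hcover
    omega
  -- equations satisfied by elements of each piece
  have hS1eq : ∀ x ∈ S1, -4 * a * x - 2 * a ^ 2 = c := by
    intro x hx
    obtain ⟨hxS, h1, h2⟩ := Finset.mem_filter.mp hx
    have e := hEq x hxS
    rw [h1, h2] at e
    linear_combination e
  have hS2eq : ∀ x ∈ S2, -8 * a * x - 4 * a ^ 2 = c := by
    intro x hx
    obtain ⟨hxS, h1, h2⟩ := Finset.mem_filter.mp hx
    have e := hEq x hxS
    rw [h1, h2] at e
    linear_combination e
  have hS3eq : ∀ x ∈ S3, 2 * x ^ 2 + 8 * a * x + 4 * a ^ 2 + c = 0 := by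
    intro x hx
    obtain ⟨hxS, h1, h2⟩ := Finset.mem_filter.mp hx
    have e := hEq x hxS
    rw [h1, h2] at e
    linear_combination -e
  have hS4eq : ∀ x ∈ S4, 2 * x ^ 2 - 4 * a * x - 2 * a ^ 2 - c = 0 := by
    intro x hx
    obtain ⟨hxS, h1, h2⟩ := Finset.mem_filter.mp hx
    have e := hEq x hxS
    rw [h1, h2] at e
    linear_combination e
  -- basic cardinality bounds
  have h4ane : (-4 : F) * a ≠ 0 :=
    mul_ne_zero (by intro h; exact h4ne (by linear_combination -h)) ha
  have h8ane : (-8 : F) * a ≠ 0 :=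
    mul_ne_zero (by intro h; exact h8ne (by linear_combination -h)) ha
  have hn1 : S1.card ≤ 1 := by
    refine Finset.card_le_one.mpr ?_
    intro x hx y hy
    have ex := hS1eq x hx
    have ey := hS1eq y hy
    exact mul_left_cancel₀ h4ane (by linear_combination ex - ey)
  have hn2 : S2.card ≤ 1 := by
    refine Finset.card_le_one.mpr ?_
    intro x hx y hy
    have ex := hS2eq x hx
    have ey := hS2eq y hy
    exact mul_left_cancel₀ h8ane (by linear_combination ex - ey)
  have hn3 : S3.card ≤ 2 := by
    by_contra h
    push_neg at h
    obtain ⟨x, hx, y, hy, z, hz, hxy, hxz, hyz⟩ := Finset.two_lt_card.mp h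
    have ex := hS3eq x hx
    have ey := hS3eq y hy
    have ez := hS3eq z hz
    have hfacxy : (x - y) * (2 * (x + y) + 8 * a) = 0 := by linear_combination ex - ey
    have hfacxz : (x - z) * (2 * (x + z) + 8 * a) = 0 := by linear_combination ex - ez
    have hsxy : 2 * (x + y) + 8 * a = 0 := by
      rcases mul_eq_zero.mp hfacxy with h' | h'
      · exact absurd (sub_eq_zero.mp h') hxy
      · exact h'
    have hsxz : 2 * (x + z) + 8 * a = 0 := by
      rcases mul_eq_zero.mp hfacxz with h' | h'
      · exact absurd (sub_eq_zero.mp h') hxz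
      · exact h'
    exact hyz (mul_left_cancel₀ h2ne (by linear_combination hsxy - hsxz))
  have hn4 : S4.card ≤ 2 := by
    by_contra h
    push_neg at h
    obtain ⟨x, hx, y, hy, z, hz, hxy, hxz, hyz⟩ := Finset.two_lt_card.mp h
    have ex := hS4eq x hx
    have ey := hS4eq y hy
    have ez := hS4eq z hz
    have hfacxy : (x - y) * (2 * (x + y) - 4 * a) = 0 := by linear_combination ex - ey
    have hfacxz : (x - z) * (2 * (x + z) - 4 * a) = 0 := by linear_combination ex - ez
    have hsxy : 2 * (x + y) - 4 * a = 0 := by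
      rcases mul_eq_zero.mp hfacxy with h' | h'
      · exact absurd (sub_eq_zero.mp h') hxy
      · exact h'
    have hsxz : 2 * (x + z) - 4 * a = 0 := by
      rcases mul_eq_zero.mp hfacxz with h' | h'
      · exact absurd (sub_eq_zero.mp h') hxz
      · exact h'
    exact hyz (mul_left_cancel₀ h2ne (by linear_combination hsxy - hsxz))
  have hn0 : S0.card ≤ 2 := by
    have hsub : S0 ⊆ {0, -a} := by
      intro x hx
      obtain ⟨_, h'⟩ := Finset.mem_filter.mp hx
      rcases h' with h' | h'
      · simp [h']
      · simp [eq_neg_of_add_eq_zero_left h']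
    exact (Finset.card_le_card hsub).trans (by
      refine (Finset.card_insert_le _ _).trans ?_
      simp)
  -- character consequences
  have hH1 : S1.Nonempty → (c + 2 * a ^ 2) ^ m = -(a ^ m) ∧ (c - 2 * a ^ 2) ^ m = -(a ^ m) := by
    rintro ⟨x, hx⟩
    obtain ⟨hxS, hx1, hxa1⟩ := Finset.mem_filter.mp hx
    have ex := hS1eq x hx
    constructor
    · have h' : c + 2 * a ^ 2 = -4 * a * x := by linear_combination -ex
      rw [h', hpow3, hneg4, hx1]; ring
    · have h' : c - 2 * a ^ 2 = -4 * a * (x + a) := by linear_combination -ex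
      rw [h', hpow3, hneg4, hxa1]; ring
  have hH2 : S2.Nonempty → (c + 4 * a ^ 2) ^ m = -(a ^ m) ∧ (4 * a ^ 2 - c) ^ m = a ^ m := by
    rintro ⟨x, hx⟩
    obtain ⟨hxS, hx1, hxa1⟩ := Finset.mem_filter.mp hx
    have ex := hS2eq x hx
    constructor
    · have h' : c + 4 * a ^ 2 = -8 * a * x := by linear_combination -ex
      rw [h', hpow3, hneg8, hx1]; ring
    · have h' : 4 * a ^ 2 - c = 8 * a * (x + a) := by linear_combination ex
      rw [h', hpow3, h8m, hxa1]; ring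
  have hH3 : 1 < S3.card →
      (c + 4 * a ^ 2) ^ m = -1 ∧ (c - 2 * a ^ 2) ^ m = -1 ∧ (4 * a ^ 2 - c) ^ m = -1 := by
    intro h3
    obtain ⟨x, hx, y, hy, hxy⟩ := Finset.one_lt_card.mp h3
    obtain ⟨hxS, hx1, hxa1⟩ := Finset.mem_filter.mp hx
    obtain ⟨hyS, hy1, hya1⟩ := Finset.mem_filter.mp hy
    have ex := hS3eq x hx
    have ey := hS3eq y hy
    have hfac : (x - y) * (2 * (x + y) + 8 * a) = 0 := by linear_combination ex - ey
    have hsum0 : x + y + 4 * a = 0 := by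
      rcases mul_eq_zero.mp hfac with h' | h'
      · exact absurd (sub_eq_zero.mp h') hxy
      · have h2' : (2:F) * (x + y + 4 * a) = 0 := by linear_combination h'
        rcases mul_eq_zero.mp h2' with h2'' | h2''
        · exact absurd h2'' h2ne
        · exact h2''
    have hprod : c + 4 * a ^ 2 = 2 * (x * y) := by
      linear_combination ex - 2 * x * hsum0
    have hprod2 : c - 2 * a ^ 2 = 2 * ((x + a) * (y + a)) := by
      linear_combination ex + (-2 * x - 2 * a) * hsum0
    have hdisc : 2 * (4 * a ^ 2 - c) = (x - y) ^ 2 := by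
      linear_combination (-2) * ex + (3 * x - y + 4 * a) * hsum0
    refine ⟨?_, ?_, ?_⟩
    · rw [hprod, mul_pow, hη2, mul_pow, hx1, hy1]; ring
    · rw [hprod2, mul_pow, hη2, mul_pow, hxa1, hya1]; ring
    · have hr : ((x - y) ^ 2) ^ m = 1 := hsqm _ (sub_ne_zero.mpr hxy)
      have h2r : (2:F) ^ m * (4 * a ^ 2 - c) ^ m = 1 := by
        rw [← mul_pow, hdisc]; exact hr
      rw [hη2] at h2r
      linear_combination -h2r
  have hH4 : 1 < S4.card →
      (c + 2 * a ^ 2) ^ m = 1 ∧ (4 * a ^ 2 - c) ^ m = -1 ∧ (c + 4 * a ^ 2) ^ m = -1 := by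
    intro h4
    obtain ⟨x, hx, y, hy, hxy⟩ := Finset.one_lt_card.mp h4
    obtain ⟨hxS, hx1, hxa1⟩ := Finset.mem_filter.mp hx
    obtain ⟨hyS, hy1, hya1⟩ := Finset.mem_filter.mp hy
    have ex := hS4eq x hx
    have ey := hS4eq y hy
    have hfac : (x - y) * (2 * (x + y) - 4 * a) = 0 := by linear_combination ex - ey
    have hsum0 : x + y - 2 * a = 0 := by
      rcases mul_eq_zero.mp hfac with h' | h'
      · exact absurd (sub_eq_zero.mp h') hxy
      · have h2' : (2:F) * (x + y - 2 * a) = 0 := by linear_combination h'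
        rcases mul_eq_zero.mp h2' with h2'' | h2''
        · exact absurd h2'' h2ne
        · exact h2''
    have hprod : c + 2 * a ^ 2 = -2 * (x * y) := by
      linear_combination -ex + 2 * x * hsum0
    have hprod2 : 4 * a ^ 2 - c = 2 * ((x + a) * (y + a)) := by
      linear_combination -hprod - 2 * a * hsum0
    have hdisc : 2 * (c + 4 * a ^ 2) = (x - y) ^ 2 := by
      linear_combination 2 * hprod - (x + y + 2 * a) * hsum0
    refine ⟨?_, ?_, ?_⟩
    · rw [hprod, mul_pow, hneg2, mul_pow, hx1, hy1]; ring
    · rw [hprod2, mul_pow, hη2, mul_pow, hxa1, hya1]; ring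
    · have hr : ((x - y) ^ 2) ^ m = 1 := hsqm _ (sub_ne_zero.mpr hxy)
      have h2r : (2:F) ^ m * (c + 4 * a ^ 2) ^ m = 1 := by
        rw [← mul_pow, hdisc]; exact hr
      rw [hη2] at h2r
      linear_combination -h2r
  have hH0a : (0:F) ∈ S → c = (a ^ m - 3) * a ^ 2 := by
    intro h
    have h0 := (hmem 0).mp h
    rw [hf, hf, zero_add] at h0
    linear_combination -h0
  have hH0b : -a ∈ S → c = (a ^ m + 3) * a ^ 2 := by
    intro h
    have h0 := (hmem (-a)).mp h
    rw [hf, hf, neg_add_cancel, hnegam] at h0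
    linear_combination -h0
  -- final case analysis
  have hcase := hcards
  by_cases h0S : (0:F) ∈ S <;> by_cases haS : -a ∈ S
  · -- both special points are solutions (forces characteristic 3)
    have hca := hH0a h0S
    have hcb := hH0b haS
    have h6 : (6:F) * a ^ 2 = 0 := by linear_combination hca - hcb
    have h3z : (3:F) = 0 := by
      have h6' : (2:F) * ((3:F) * a ^ 2) = 0 := by linear_combination h6
      rcases mul_eq_zero.mp h6' with h | h
      · exact absurd h h2ne
      rcases mul_eq_zero.mp h with h | h
      · exact h
      · exact absurd h (pow_ne_zero _ ha)
    rcases hu a ha with hA | hA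
    · rw [hA] at hca
      have hc : c = -2 * a ^ 2 := by linear_combination hca
      have hz1 : S1.card = 0 := by
        refine Finset.card_eq_zero.mpr (Finset.eq_empty_iff_forall_notMem.mpr ?_)
        intro x hx
        obtain ⟨hxS, hx1, hxa1⟩ := Finset.mem_filter.mp hx
        have ex := hS1eq x hx
        have hx0 : (-4 * a) * x = 0 := by linear_combination ex + hc
        rcases mul_eq_zero.mp hx0 with h' | h'
        · exact h4ane h'
        · rw [h', hη0] at hx1; exact h0ne1 hx1
      have hz2 : S2.card = 0 := by
        refine Finset.card_eq_zero.mpr (Finset.eq_empty_iff_forall_notMem.mpr ?_)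
        intro x hx
        obtain ⟨hxS, hx1, hxa1⟩ := Finset.mem_filter.mp hx
        have ex := hS2eq x hx
        have hx0 : ((-2) * a) * (x + a) = 0 := by
          linear_combination ex + hc + 2 * a * x * h3z
        rcases mul_eq_zero.mp hx0 with h' | h'
        · exact mul_ne_zero (neg_ne_zero.mpr h2ne) ha h'
        · rw [h', hη0] at hxa1; exact h0nem1 hxa1
      have hz4 : S4.card = 0 := by
        refine Finset.card_eq_zero.mpr (Finset.eq_empty_iff_forall_notMem.mpr ?_)
        intro x hx
        obtain ⟨hxS, hx1, hxa1⟩ := Finset.mem_filter.mp hx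
        have ex := hS4eq x hx
        have hx0 : (2 * x) * (x - 2 * a) = 0 := by linear_combination ex + hc
        rcases mul_eq_zero.mp hx0 with h' | h'
        · rcases mul_eq_zero.mp h' with h'' | h''
          · exact h2ne h''
          · rw [h'', hη0] at hx1; exact h0nem1 hx1
        · have hxa0 : x + a = 0 := by
            rw [sub_eq_zero] at h'
            rw [h']; linear_combination a * h3z
          rw [hxa0, hη0] at hxa1; exact h0ne1 hxa1
      omega
    · rw [hA] at hca hcb
      have hc : c = -4 * a ^ 2 := by linear_combination hca
      have hc2 : c = 2 * a ^ 2 := by linear_combination hcb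
      have hz2 : S2.card = 0 := by
        refine Finset.card_eq_zero.mpr (Finset.eq_empty_iff_forall_notMem.mpr ?_)
        intro x hx
        obtain ⟨hxS, hx1, hxa1⟩ := Finset.mem_filter.mp hx
        have ex := hS2eq x hx
        have hx0 : ((-8) * a) * x = 0 := by linear_combination ex + hc
        rcases mul_eq_zero.mp hx0 with h' | h'
        · exact h8ane h'
        · rw [h', hη0] at hx1; exact h0nem1 hx1
      have hz1 : S1.card = 0 := by
        refine Finset.card_eq_zero.mpr (Finset.eq_empty_iff_forall_notMem.mpr ?_)
        intro x hx
        obtain ⟨hxS, hx1, hxa1⟩ := Finset.mem_filter.mp hx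
        have ex := hS1eq x hx
        have hx0 : ((-4) * a) * (x + a) = 0 := by linear_combination ex + hc2
        rcases mul_eq_zero.mp hx0 with h' | h'
        · exact h4ane h'
        · rw [h', hη0] at hxa1; exact h0ne1 hxa1
      have hz3 : S3.card = 0 := by
        refine Finset.card_eq_zero.mpr (Finset.eq_empty_iff_forall_notMem.mpr ?_)
        intro x hx
        obtain ⟨hxS, hx1, hxa1⟩ := Finset.mem_filter.mp hx
        have ex := hS3eq x hx
        have hx0 : (2 * x) * (x + a) = 0 := by
          linear_combination ex - hc2 + (-2 * a * x - 2 * a ^ 2) * h3z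
        rcases mul_eq_zero.mp hx0 with h' | h'
        · rcases mul_eq_zero.mp h' with h'' | h''
          · exact h2ne h''
          · rw [h'', hη0] at hx1; exact h0ne1 hx1
        · rw [h', hη0] at hxa1; exact h0nem1 hxa1
      omega
  · -- only 0 is a special solution
    have hca := hH0a h0S
    have hn0' : S0.card ≤ 1 := by
      refine Finset.card_le_one.mpr ?_
      have hval : ∀ x ∈ S0, x = 0 := by
        intro x hx
        obtain ⟨hxS, h'⟩ := Finset.mem_filter.mp hx
        rcases h' with h' | h'
        · exact h'
        · exact absurd ((eq_neg_of_add_eq_zero_left h') ▸ hxS) haS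
      intro x hx y hy
      rw [hval x hx, hval y hy]
    rcases hu a ha with hA | hA
    · rw [hA] at hca
      have hc : c = -2 * a ^ 2 := by linear_combination hca
      have hz1 : S1.card = 0 := by
        refine Finset.card_eq_zero.mpr (Finset.eq_empty_iff_forall_notMem.mpr ?_)
        intro x hx
        obtain ⟨hxS, hx1, hxa1⟩ := Finset.mem_filter.mp hx
        have ex := hS1eq x hx
        have hx0 : (-4 * a) * x = 0 := by linear_combination ex + hc
        rcases mul_eq_zero.mp hx0 with h' | h'
        · exact h4ane h'
        · rw [h', hη0] at hx1; exact h0ne1 hx1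
      have hn4' : S4.card ≤ 1 := by
        refine Finset.card_le_one.mpr ?_
        have hval : ∀ x ∈ S4, x = 2 * a := by
          intro x hx
          obtain ⟨hxS, hx1, hxa1⟩ := Finset.mem_filter.mp hx
          have ex := hS4eq x hx
          have hx0 : (2 * x) * (x - 2 * a) = 0 := by linear_combination ex + hc
          rcases mul_eq_zero.mp hx0 with h' | h'
          · rcases mul_eq_zero.mp h' with h'' | h''
            · exact absurd h'' h2ne
            · rw [h'', hη0] at hx1; exact absurd hx1 h0nem1
          · exact sub_eq_zero.mp h'
        intro x hx y hy
        rw [hval x hx, hval y hy]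
      by_cases h3b : 1 < S3.card
      · have hz2 : S2.card = 0 := by
          by_contra hne
          obtain ⟨e1, e2⟩ := hH2 (Finset.card_pos.mp (Nat.pos_of_ne_zero hne))
          obtain ⟨d1, d2, d3⟩ := hH3 h3b
          rw [hA] at e2
          exact h1ne (by linear_combination d3 - e2)
        omega
      · omega
    · rw [hA] at hca
      have hc : c = -4 * a ^ 2 := by linear_combination hca
      have hz2 : S2.card = 0 := by
        refine Finset.card_eq_zero.mpr (Finset.eq_empty_iff_forall_notMem.mpr ?_)
        intro x hx
        obtain ⟨hxS, hx1, hxa1⟩ := Finset.mem_filter.mp hx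
        have ex := hS2eq x hx
        have hx0 : ((-8) * a) * x = 0 := by linear_combination ex + hc
        rcases mul_eq_zero.mp hx0 with h' | h'
        · exact h8ane h'
        · rw [h', hη0] at hx1; exact h0nem1 hx1
      have hn3' : S3.card ≤ 1 := by
        refine Finset.card_le_one.mpr ?_
        have hval : ∀ x ∈ S3, x = -(4 * a) := by
          intro x hx
          obtain ⟨hxS, hx1, hxa1⟩ := Finset.mem_filter.mp hx
          have ex := hS3eq x hx
          have hx0 : (2 * x) * (x + 4 * a) = 0 := by linear_combination ex - hc
          rcases mul_eq_zero.mp hx0 with h' | h'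
          · rcases mul_eq_zero.mp h' with h'' | h''
            · exact absurd h'' h2ne
            · rw [h'', hη0] at hx1; exact absurd hx1 h0ne1
          · exact eq_neg_of_add_eq_zero_left h'
        intro x hx y hy
        rw [hval x hx, hval y hy]
      have hn4'' : S4.card ≤ 1 := by
        by_contra hb
        push_neg at hb
        obtain ⟨e1, e2, e3⟩ := hH4 hb
        have hzero : c + 4 * a ^ 2 = 0 := by linear_combination hc
        rw [hzero, hη0] at e3
        exact h0nem1 e3
      omega
  · -- only -a is a special solution
    have hcb := hH0b haS
    have hn0' : S0.card ≤ 1 := by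
      refine Finset.card_le_one.mpr ?_
      have hval : ∀ x ∈ S0, x = -a := by
        intro x hx
        obtain ⟨hxS, h'⟩ := Finset.mem_filter.mp hx
        rcases h' with h' | h'
        · exact absurd (h' ▸ hxS) h0S
        · exact eq_neg_of_add_eq_zero_left h'
      intro x hx y hy
      rw [hval x hx, hval y hy]
    rcases hu a ha with hA | hA
    · rw [hA] at hcb
      have hc : c = 4 * a ^ 2 := by linear_combination hcb
      have hz2 : S2.card = 0 := by
        refine Finset.card_eq_zero.mpr (Finset.eq_empty_iff_forall_notMem.mpr ?_)
        intro x hx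
        obtain ⟨hxS, hx1, hxa1⟩ := Finset.mem_filter.mp hx
        have ex := hS2eq x hx
        have hx0 : ((-8) * a) * (x + a) = 0 := by linear_combination ex + hc
        rcases mul_eq_zero.mp hx0 with h' | h'
        · exact h8ane h'
        · rw [h', hη0] at hxa1; exact h0nem1 hxa1
      have hn3'' : S3.card ≤ 1 := by
        by_contra hb
        push_neg at hb
        obtain ⟨d1, d2, d3⟩ := hH3 hb
        have hzero : 4 * a ^ 2 - c = 0 := by linear_combination -hc
        rw [hzero, hη0] at d3
        exact h0nem1 d3
      have hn4' : S4.card ≤ 1 := by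
        refine Finset.card_le_one.mpr ?_
        have hval : ∀ x ∈ S4, x = 3 * a := by
          intro x hx
          obtain ⟨hxS, hx1, hxa1⟩ := Finset.mem_filter.mp hx
          have ex := hS4eq x hx
          have hx0 : (2 * (x + a)) * (x - 3 * a) = 0 := by linear_combination ex + hc
          rcases mul_eq_zero.mp hx0 with h' | h'
          · rcases mul_eq_zero.mp h' with h'' | h''
            · exact absurd h'' h2ne
            · rw [h'', hη0] at hxa1; exact absurd hxa1 h0ne1
          · exact sub_eq_zero.mp h'
        intro x hx y hy
        rw [hval x hx, hval y hy]
      omega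
    · rw [hA] at hcb
      have hc : c = 2 * a ^ 2 := by linear_combination hcb
      have hz1 : S1.card = 0 := by
        refine Finset.card_eq_zero.mpr (Finset.eq_empty_iff_forall_notMem.mpr ?_)
        intro x hx
        obtain ⟨hxS, hx1, hxa1⟩ := Finset.mem_filter.mp hx
        have ex := hS1eq x hx
        have hx0 : ((-4) * a) * (x + a) = 0 := by linear_combination ex + hc
        rcases mul_eq_zero.mp hx0 with h' | h'
        · exact h4ane h'
        · rw [h', hη0] at hxa1; exact h0ne1 hxa1
      have hn3' : S3.card ≤ 1 := by
        refine Finset.card_le_one.mpr ?_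
        have hval : ∀ x ∈ S3, x = -(3 * a) := by
          intro x hx
          obtain ⟨hxS, hx1, hxa1⟩ := Finset.mem_filter.mp hx
          have ex := hS3eq x hx
          have hx0 : (2 * (x + a)) * (x + 3 * a) = 0 := by linear_combination ex - hc
          rcases mul_eq_zero.mp hx0 with h' | h'
          · rcases mul_eq_zero.mp h' with h'' | h''
            · exact absurd h'' h2ne
            · rw [h'', hη0] at hxa1; exact absurd hxa1 h0nem1
          · exact eq_neg_of_add_eq_zero_left h'
        intro x hx y hy
        rw [hval x hx, hval y hy]
      by_cases h4b : 1 < S4.card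
      · have hz2 : S2.card = 0 := by
          by_contra hne
          obtain ⟨e1, e2⟩ := hH2 (Finset.card_pos.mp (Nat.pos_of_ne_zero hne))
          obtain ⟨d1, d2, d3⟩ := hH4 h4b
          rw [hA] at e1
          exact h1ne (by linear_combination d3 - e1)
        omega
      · omega
  · -- no special solutions
    have hz0 : S0.card = 0 := by
      refine Finset.card_eq_zero.mpr (Finset.eq_empty_iff_forall_notMem.mpr ?_)
      intro x hx
      obtain ⟨hxS, h'⟩ := Finset.mem_filter.mp hx
      rcases h' with h' | h'
      · exact h0S (h' ▸ hxS)
      · exact haS ((eq_neg_of_add_eq_zero_left h') ▸ hxS)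
    by_cases h3b : 1 < S3.card <;> by_cases h4b : 1 < S4.card
    · have hz1 : S1.card = 0 := by
        by_contra hne
        obtain ⟨e1, e2⟩ := hH1 (Finset.card_pos.mp (Nat.pos_of_ne_zero hne))
        obtain ⟨f1, f2, f3⟩ := hH4 h4b
        obtain ⟨d1, d2, d3⟩ := hH3 h3b
        have hAm : a ^ m = -1 := by linear_combination e1 - f1
        exact h1ne (by linear_combination d2 - e2 + hAm)
      have hz2 : S2.card = 0 := by
        by_contra hne
        obtain ⟨e1, e2⟩ := hH2 (Finset.card_pos.mp (Nat.pos_of_ne_zero hne))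
        obtain ⟨d1, d2, d3⟩ := hH3 h3b
        have hAm : a ^ m = 1 := by linear_combination e1 - d1
        exact h1ne (by linear_combination d3 - e2 - hAm)
      omega
    · have hkey : S1.card = 0 ∨ S2.card = 0 := by
        by_contra hne
        push_neg at hne
        obtain ⟨e1, e2⟩ := hH1 (Finset.card_pos.mp (Nat.pos_of_ne_zero hne.1))
        obtain ⟨g1, g2⟩ := hH2 (Finset.card_pos.mp (Nat.pos_of_ne_zero hne.2))
        obtain ⟨d1, d2, d3⟩ := hH3 h3b
        have hAm : a ^ m = 1 := by linear_combination e2 - d2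
        exact h1ne (by linear_combination d3 - g2 - hAm)
      omega
    · have hkey : S1.card = 0 ∨ S2.card = 0 := by
        by_contra hne
        push_neg at hne
        obtain ⟨e1, e2⟩ := hH1 (Finset.card_pos.mp (Nat.pos_of_ne_zero hne.1))
        obtain ⟨g1, g2⟩ := hH2 (Finset.card_pos.mp (Nat.pos_of_ne_zero hne.2))
        obtain ⟨f1, f2, f3⟩ := hH4 h4b
        have hAm : a ^ m = -1 := by linear_combination e1 - f1
        exact h1ne (by linear_combination f3 - g1 + hAm)
      omega
    · omega
end

section
/- Let q be an odd prime power, d an even natural number with d dividing q-1 and (q-1)/d odd. Let h be a polynomial over F_q, T(x) = x^((q-1)/d), and f(x) = x^2 · h(T(x)). If f is a permutation of F_q, then for every nonzero a in F_q and every c in F_q, the equation f(x+a) - f(x) = c has at most 2d^2 - (3/2)d solutions x in F_q. -/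
/-!
Write `f x = x² w (x ^ s)` and sort the solutions `x` by the pair `(x ^ s, (x + a) ^ s)` of
`d`-th roots of unity (see `powPair`). On the fibre over `(α, β)` the equation reads
`w β (x + a)² - w α x² = c`, whose linear coefficient `2 a w β` is nonzero because `f` is
injective; so a fibre holds at most two solutions, and a diagonal fibre (`β = α`) at most one.
In a block `{±α} × {±α}` this gives six; if both antidiagonal fibres are full, Vieta's product
formula raised to the odd power `s` yields `(c - a² w α) ^ s = -(c + a² w α) ^ s` (and the same
for `-α`), which leaves no diagonal solution, so a block holds at most five. Summing over the
`m ≤ d` values of `x ^ s` gives `2 #S ≤ 5 m + 4 m (m - 2)`, hence the bound `2 d² - 3 d / 2`.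
-/

open Finset Polynomial

section Roots

variable {F : Type*} [Field F]

lemma card_le_two_of_quadratic_eq_zero [DecidableEq F] {u v r : F} (hv : v ≠ 0) {S : Finset F}
    (hS : ∀ x ∈ S, u * x ^ 2 + v * x + r = 0) : #S ≤ 2 := by
  have hp : C u * X ^ 2 + C v * X + C r ≠ 0 := fun h0 =>
    hv (by simpa [coeff_X, coeff_C] using congrArg (coeff · 1) h0)
  refine (card_le_degree_of_subset_roots fun x hx => (mem_roots hp).2 ?_).trans
    natDegree_quadratic_le
  simpa using hS x hx

lemma card_le_one_of_linear_eq_zero {v r : F} (hv : v ≠ 0) {S : Finset F}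
    (hS : ∀ x ∈ S, v * x + r = 0) : #S ≤ 1 :=
  card_le_one.2 fun x hx y hy => mul_left_cancel₀ hv (by linear_combination hS x hx - hS y hy)

lemma neg_ne_self_of_ne_zero {x : F} (h2 : (2 : F) ≠ 0) (hx : x ≠ 0) : -x ≠ x := fun h =>
  hx ((mul_eq_zero.1 (by linear_combination -h : 2 * x = 0)).resolve_left h2)

lemma mul_eq_of_quadratic_eq_zero {u v r x₁ x₂ : F} (hx : x₁ ≠ x₂)
    (h₁ : u * x₁ ^ 2 + v * x₁ + r = 0) (h₂ : u * x₂ ^ 2 + v * x₂ + r = 0) :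
    u * (x₁ * x₂) = r := by
  have hfactor : (x₁ - x₂) * (u * (x₁ + x₂) + v) = 0 := by linear_combination h₁ - h₂
  have hsum : u * (x₁ + x₂) + v = 0 := (mul_eq_zero.1 hfactor).resolve_left (sub_ne_zero.2 hx)
  linear_combination x₁ * hsum - h₁

lemma pow_eq_of_two_roots {s : ℕ} (hs : Odd s) {a c α b₁ b₂ x₁ x₂ : F} (hx : x₁ ≠ x₂)
    (h₁ : b₂ * (x₁ + a) ^ 2 - b₁ * x₁ ^ 2 = c) (h₂ : b₂ * (x₂ + a) ^ 2 - b₁ * x₂ ^ 2 = c)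
    (hx₁ : x₁ ^ s = α) (hx₂ : x₂ ^ s = α)
    (hx₁a : (x₁ + a) ^ s = -α) (hx₂a : (x₂ + a) ^ s = -α) :
    (c - a ^ 2 * b₂) ^ s = -((b₂ - b₁) ^ s * α ^ 2) ∧
      (c + a ^ 2 * b₁) ^ s = -((b₂ - b₁) ^ s * α ^ 2) := by
  have hprod : (b₂ - b₁) * (x₁ * x₂) = a ^ 2 * b₂ - c :=
    mul_eq_of_quadratic_eq_zero (v := 2 * a * b₂) hx (by linear_combination h₁)
      (by linear_combination h₂)
  have hprod' : (b₂ - b₁) * ((x₁ + a) * (x₂ + a)) = -(a ^ 2 * b₁) - c :=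
    mul_eq_of_quadratic_eq_zero (v := 2 * a * b₁) (by simpa using hx)
      (by linear_combination h₁) (by linear_combination h₂)
  constructor
  · rw [show c - a ^ 2 * b₂ = -((b₂ - b₁) * (x₁ * x₂)) by linear_combination hprod,
      hs.neg_pow, mul_pow, mul_pow, hx₁, hx₂, sq]
  · rw [show c + a ^ 2 * b₁ = -((b₂ - b₁) * ((x₁ + a) * (x₂ + a))) by
        linear_combination hprod', hs.neg_pow, mul_pow, mul_pow, hx₁a, hx₂a]
    ring

end Roots

section PowPair

variable {F : Type*} [Field F] [DecidableEq F] {f w : F → F} {s : ℕ} {a c x α β : F}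
  {S : Finset F}

/-- Copying the other coordinate when a base vanishes keeps the pair among nonzero `s`-th powers,
while `f (x + a) - f x` still depends only on the pair (`sub_eq_of_powPair_eq`). -/
def powPair (s : ℕ) (a x : F) : F × F :=
  (if x = 0 then (x + a) ^ s else x ^ s, if x + a = 0 then x ^ s else (x + a) ^ s)

lemma powPair_of_ne_zero (hx : x ≠ 0) (hxa : x + a ≠ 0) :
    powPair s a x = (x ^ s, (x + a) ^ s) := by
  simp [powPair, hx, hxa]

lemma sub_eq_of_powPair_eq (hf : ∀ x, f x = x ^ 2 * w (x ^ s)) (h : powPair s a x = (α, β)) :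
    f (x + a) - f x = w β * (x + a) ^ 2 - w α * x ^ 2 := by
  simp only [powPair, Prod.mk.injEq] at h
  obtain ⟨rfl, rfl⟩ := h
  rw [hf, hf]
  split_ifs with hxa hx hx
  · simp_all
  · rw [hxa]; ring
  · rw [hx]; ring
  · ring

lemma powPair_fst_eq_snd (h : x = 0 ∨ x + a = 0) : (powPair s a x).1 = (powPair s a x).2 := by
  simp only [powPair]
  split_ifs <;> simp_all

lemma pow_eq_of_powPair_eq_neg (h2 : (2 : F) ≠ 0) (hα : α ≠ 0)
    (h : powPair s a x = (α, -α)) :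
    x ^ s = α ∧ (x + a) ^ s = -α := by
  have hne : x ≠ 0 ∧ x + a ≠ 0 := by
    by_contra hdeg
    have := powPair_fst_eq_snd (s := s) (not_and_or.1 hdeg |>.imp not_not.1 not_not.1)
    rw [h] at this
    exact neg_ne_self_of_ne_zero h2 hα this.symm
  simpa [powPair_of_ne_zero hne.1 hne.2] using h

lemma eq_of_mem_filter_powPair (hf : ∀ x, f x = x ^ 2 * w (x ^ s))
    (hS : ∀ x ∈ S, f (x + a) - f x = c) (hx : x ∈ S.filter (powPair s a · = (α, β))) :
    w β * (x + a) ^ 2 - w α * x ^ 2 = c :=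
  (sub_eq_of_powPair_eq hf (mem_filter.1 hx).2).symm.trans (hS x (mem_filter.1 hx).1)

lemma card_filter_powPair_le_two (hf : ∀ x, f x = x ^ 2 * w (x ^ s))
    (hS : ∀ x ∈ S, f (x + a) - f x = c) (hβ : 2 * a * w β ≠ 0) :
    #(S.filter (powPair s a · = (α, β))) ≤ 2 :=
  card_le_two_of_quadratic_eq_zero hβ (u := w β - w α) (r := a ^ 2 * w β - c) fun x hx => by
    linear_combination eq_of_mem_filter_powPair hf hS hx

lemma card_filter_powPair_diag_le_one (hf : ∀ x, f x = x ^ 2 * w (x ^ s))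
    (hS : ∀ x ∈ S, f (x + a) - f x = c) (hα : 2 * a * w α ≠ 0) :
    #(S.filter (powPair s a · = (α, α))) ≤ 1 :=
  card_le_one_of_linear_eq_zero hα (r := a ^ 2 * w α - c) fun x hx => by
    linear_combination eq_of_mem_filter_powPair hf hS hx

/-- A diagonal solution has `k x = c - a² w α` and `k (x + a) = c + a² w α` with `k = 2 a w α`,
so `hUV` would force `x ^ s = -(x + a) ^ s ≠ 0`, contradicting `x ^ s = (x + a) ^ s`. -/
lemma filter_powPair_diag_eq_empty (hs : s ≠ 0) (h2 : (2 : F) ≠ 0)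
    (hf : ∀ x, f x = x ^ 2 * w (x ^ s)) (hS : ∀ x ∈ S, f (x + a) - f x = c)
    (hα : 2 * a * w α ≠ 0) (hUV : (c - a ^ 2 * w α) ^ s = -(c + a ^ 2 * w α) ^ s) :
    S.filter (powPair s a · = (α, α)) = ∅ := by
  refine filter_eq_empty_iff.2 fun x hxS hx => ?_
  have hlin := eq_of_mem_filter_powPair hf hS (mem_filter.2 ⟨hxS, hx⟩)
  have hU : 2 * a * w α * x = c - a ^ 2 * w α := by linear_combination hlin
  have hV : 2 * a * w α * (x + a) = c + a ^ 2 * w α := by linear_combination hlin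
  have hV0 : c + a ^ 2 * w α ≠ 0 := by
    intro hV0
    have hU0 : c - a ^ 2 * w α = 0 :=
      pow_eq_zero_iff hs |>.1 (by rw [hUV, hV0, zero_pow hs, neg_zero])
    have hka : 2 * a * w α * a = 0 := by linear_combination hV - hU + hV0 - hU0
    exact mul_ne_zero hα (right_ne_zero_of_mul (left_ne_zero_of_mul hα)) hka
  have hx0 : x ≠ 0 := by
    rintro rfl
    have hVs : (c + a ^ 2 * w α) ^ s = 0 := by
      rw [← neg_eq_zero, ← hUV, ← hU, mul_zero, zero_pow hs]
    exact hV0 (pow_eq_zero_iff hs |>.1 hVs)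
  have hxa0 : x + a ≠ 0 := fun hxa => hV0 (by rw [← hV, hxa, mul_zero])
  rw [powPair_of_ne_zero hx0 hxa0, Prod.mk.injEq] at hx
  have hsame : (c - a ^ 2 * w α) ^ s = (c + a ^ 2 * w α) ^ s := by
    rw [← hU, ← hV, mul_pow _ x, mul_pow _ (x + a), hx.1, hx.2]
  have h2V : 2 * (c + a ^ 2 * w α) ^ s = 0 := by linear_combination hUV - hsame
  exact hV0 (pow_eq_zero_iff hs |>.1 ((mul_eq_zero.1 h2V).resolve_left h2))

lemma pow_eq_of_one_lt_card_filter_powPair_neg (hs : Odd s) (h2 : (2 : F) ≠ 0) (hα : α ≠ 0)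
    (hf : ∀ x, f x = x ^ 2 * w (x ^ s)) (hS : ∀ x ∈ S, f (x + a) - f x = c)
    (hcard : 1 < #(S.filter (powPair s a · = (α, -α)))) :
    (c - a ^ 2 * w (-α)) ^ s = -((w (-α) - w α) ^ s * α ^ 2) ∧
      (c + a ^ 2 * w α) ^ s = -((w (-α) - w α) ^ s * α ^ 2) := by
  obtain ⟨x₁, hx₁, x₂, hx₂, hx⟩ := one_lt_card.1 hcard
  obtain ⟨hx₁s, hx₁as⟩ := pow_eq_of_powPair_eq_neg h2 hα (mem_filter.1 hx₁).2
  obtain ⟨hx₂s, hx₂as⟩ := pow_eq_of_powPair_eq_neg h2 hα (mem_filter.1 hx₂).2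
  exact pow_eq_of_two_roots hs hx (eq_of_mem_filter_powPair hf hS hx₁)
    (eq_of_mem_filter_powPair hf hS hx₂) hx₁s hx₂s hx₁as hx₂as

/-- Four solutions on the two antidiagonal fibres force `U ^ s = -V ^ s` for both `±α`, which
empties both diagonal fibres; otherwise the antidiagonal fibres hold at most three solutions. -/
lemma card_filter_powPair_block_le_five (hs : Odd s) (h2 : (2 : F) ≠ 0) (hα : α ≠ 0)
    (hf : ∀ x, f x = x ^ 2 * w (x ^ s)) (hS : ∀ x ∈ S, f (x + a) - f x = c)
    (hwα : 2 * a * w α ≠ 0) (hwα' : 2 * a * w (-α) ≠ 0) :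
    #(S.filter (powPair s a · = (α, α))) + #(S.filter (powPair s a · = (α, -α))) +
      (#(S.filter (powPair s a · = (-α, -α))) + #(S.filter (powPair s a · = (-α, α)))) ≤ 5 := by
  have hdiag := card_filter_powPair_diag_le_one hf hS hwα
  have hdiag' := card_filter_powPair_diag_le_one hf hS hwα'
  have hanti := card_filter_powPair_le_two (α := α) hf hS hwα'
  have hanti' := card_filter_powPair_le_two (α := -α) hf hS hwα
  by_cases hmany : 1 < #(S.filter (powPair s a · = (α, -α))) ∧
      1 < #(S.filter (powPair s a · = (-α, α)))
  · obtain ⟨k, k'⟩ := hmany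
    obtain ⟨k₁, k₂⟩ := pow_eq_of_one_lt_card_filter_powPair_neg hs h2 hα hf hS k
    obtain ⟨k₁', k₂'⟩ :=
      pow_eq_of_one_lt_card_filter_powPair_neg hs h2 (neg_ne_zero.2 hα) hf hS (by rwa [neg_neg])
    rw [neg_neg, show w α - w (-α) = -(w (-α) - w α) by ring, hs.neg_pow] at k₁' k₂'
    have hempty :=
      filter_powPair_diag_eq_empty hs.pos.ne' h2 hf hS hwα (by rw [k₁', k₂]; ring)
    have hempty' :=
      filter_powPair_diag_eq_empty hs.pos.ne' h2 hf hS hwα' (by rw [k₁, k₂']; ring)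
    rw [hempty, hempty', card_empty]
    omega
  · omega

lemma powPair_mem_product {μ : Finset F} (ha : a ≠ 0) (hμ : ∀ x ≠ 0, x ^ s ∈ μ) (x : F) :
    powPair s a x ∈ μ ×ˢ μ := by
  by_cases hx : x = 0
  · simp [powPair, hx, ha, hμ a ha]
  by_cases hxa : x + a = 0
  · simp [powPair, hx, hxa, hμ x hx]
  · rw [powPair_of_ne_zero hx hxa]
    exact mem_product.2 ⟨hμ x hx, hμ _ hxa⟩

theorem two_mul_card_le_of_forall_sub_eq (hs : Odd s) (h2 : (2 : F) ≠ 0) (ha : a ≠ 0)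
    (hf : ∀ x, f x = x ^ 2 * w (x ^ s)) (hS : ∀ x ∈ S, f (x + a) - f x = c) {μ : Finset F}
    (hμ : ∀ x ≠ 0, x ^ s ∈ μ) (hμneg : ∀ γ ∈ μ, -γ ∈ μ) (hμ0 : (0 : F) ∉ μ)
    (hw : ∀ γ ∈ μ, w γ ≠ 0) :
    2 * #S ≤ 5 * #μ + 4 * (#μ * (#μ - 2)) := by
  set N : F × F → ℕ := fun p => #(S.filter (powPair s a · = p))
  set M : F → ℕ := fun α => N (α, α) + N (α, -α)
  have hne : ∀ α ∈ μ, α ≠ 0 := fun α hα h => hμ0 (h ▸ hα)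
  have hkw : ∀ α ∈ μ, 2 * a * w α ≠ 0 := fun α hα => mul_ne_zero (mul_ne_zero h2 ha) (hw α hα)
  have hcard : #S = ∑ α ∈ μ, ∑ β ∈ μ, N (α, β) := by
    rw [card_eq_sum_card_fiberwise fun x _ => powPair_mem_product ha hμ x, sum_product]
  have hrow : ∀ α ∈ μ, ∑ β ∈ μ, N (α, β) ≤ M α + 2 * (#μ - 2) := by
    intro α hα
    have hα' : -α ∈ μ.erase α :=
      mem_erase.2 ⟨neg_ne_self_of_ne_zero h2 (hne α hα), hμneg α hα⟩
    rw [← add_sum_erase _ _ hα, ← add_sum_erase _ _ hα', ← add_assoc]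
    gcongr
    calc ∑ β ∈ (μ.erase α).erase (-α), N (α, β) ≤ #((μ.erase α).erase (-α)) • 2 :=
          sum_le_card_nsmul _ _ _ fun β hβ =>
            card_filter_powPair_le_two hf hS (hkw β (mem_of_mem_erase (mem_of_mem_erase hβ)))
      _ = 2 * (#μ - 2) := by
          rw [card_erase_of_mem hα', card_erase_of_mem hα, smul_eq_mul]
          omega
  have hblock : ∑ α ∈ μ, (M α + M (-α)) ≤ #μ • 5 := sum_le_card_nsmul _ _ _ fun α hα => by
    simpa [M, N] using card_filter_powPair_block_le_five hs h2 (hne α hα) hf hS (hkw α hα)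
      (hkw _ (hμneg α hα))
  have hneg : ∑ α ∈ μ, M (-α) = ∑ α ∈ μ, M α :=
    sum_nbij' Neg.neg Neg.neg hμneg hμneg (by simp) (by simp) (by simp)
  calc 2 * #S ≤ 2 * ∑ α ∈ μ, (M α + 2 * (#μ - 2)) := by
        rw [hcard]
        gcongr with α hα
        exact hrow α hα
    _ = ∑ α ∈ μ, (M α + M (-α)) + 4 * (#μ * (#μ - 2)) := by
        rw [sum_add_distrib (f := M), sum_add_distrib (f := M) (g := fun α => M (-α)), hneg,
          sum_const, smul_eq_mul]
        ring
    _ ≤ 5 * #μ + 4 * (#μ * (#μ - 2)) := by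
        rw [smul_eq_mul] at hblock
        omega

end PowPair

section NonzeroPowers

variable (F : Type*) [Field F] [Fintype F] [DecidableEq F]

def nonzeroPowers (s : ℕ) : Finset F := ({0}ᶜ : Finset F).image (fun x : F => x ^ s)

variable {F} {s : ℕ}

lemma pow_mem_nonzeroPowers {x : F} (hx : x ≠ 0) : x ^ s ∈ nonzeroPowers F s :=
  mem_image_of_mem _ (by simpa using hx)

lemma exists_of_mem_nonzeroPowers {γ : F} (hγ : γ ∈ nonzeroPowers F s) :
    ∃ x ≠ 0, x ^ s = γ := by
  simpa [nonzeroPowers] using hγ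

lemma neg_mem_nonzeroPowers (hs : Odd s) {γ : F} (hγ : γ ∈ nonzeroPowers F s) :
    -γ ∈ nonzeroPowers F s := by
  obtain ⟨x, hx, rfl⟩ := exists_of_mem_nonzeroPowers hγ
  rw [← hs.neg_pow]
  exact pow_mem_nonzeroPowers (neg_ne_zero.2 hx)

lemma zero_notMem_nonzeroPowers (hs : s ≠ 0) : (0 : F) ∉ nonzeroPowers F s := fun h0 => by
  obtain ⟨x, hx, hxs⟩ := exists_of_mem_nonzeroPowers h0
  exact hx (pow_eq_zero_iff hs |>.1 hxs)

lemma card_nonzeroPowers_le {d : ℕ} (hd : 0 < d) (hsd : s * d = Fintype.card F - 1) :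
    #(nonzeroPowers F s) ≤ d := by
  refine (card_le_card fun γ hγ => ?_).trans
    ((Multiset.toFinset_card_le _).trans (card_nthRoots d (1 : F)))
  obtain ⟨x, hx, rfl⟩ := exists_of_mem_nonzeroPowers hγ
  rw [Multiset.mem_toFinset, mem_nthRoots hd, ← pow_mul, hsd]
  exact FiniteField.pow_card_sub_one_eq_one x hx

lemma two_le_card_nonzeroPowers (hs : Odd s) (h2 : (2 : F) ≠ 0) :
    2 ≤ #(nonzeroPowers F s) := by
  have h1 : (1 : F) ∈ nonzeroPowers F s := by
    simpa using pow_mem_nonzeroPowers (s := s) (one_ne_zero : (1 : F) ≠ 0)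
  calc 2 = #{(1 : F), -1} := (card_pair (neg_ne_self_of_ne_zero h2 one_ne_zero).symm).symm
    _ ≤ #(nonzeroPowers F s) :=
      card_le_card (insert_subset h1 (singleton_subset_iff.2 (neg_mem_nonzeroPowers hs h1)))

lemma ne_zero_of_mem_nonzeroPowers {f w : F → F} (hf : ∀ x, f x = x ^ 2 * w (x ^ s))
    (hinj : Function.Injective f) {γ : F} (hγ : γ ∈ nonzeroPowers F s) : w γ ≠ 0 := by
  obtain ⟨x, hx, rfl⟩ := exists_of_mem_nonzeroPowers hγ
  intro hw
  exact hx (hinj (by rw [hf, hf, hw]; simp))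

end NonzeroPowers

lemma le_two_mul_sq_sub_of_two_mul_le {n m d : ℕ} (hm : 2 ≤ m) (hmd : m ≤ d)
    (hn : 2 * n ≤ 5 * m + 4 * (m * (m - 2))) : n ≤ 2 * d ^ 2 - 3 * d / 2 := by
  have hprod : m * (m - 2) ≤ d * (d - 2) := Nat.mul_le_mul hmd (by omega)
  have hsq : d ^ 2 = d * (d - 2) + 2 * d := by
    rw [sq, mul_comm 2 d, ← mul_add, Nat.sub_add_cancel (hm.trans hmd)]
  rw [hsq]
  generalize m * (m - 2) = u at *
  generalize d * (d - 2) = t at *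
  omega

theorem wan_lidl_s2_d_even_du_bound_general
    (F : Type*) [Field F] [Fintype F] [DecidableEq F]
    (q d : ℕ) (hq : Fintype.card F = q) (hqodd : Odd q)
    (hd : d ∣ q - 1) (hodd : Odd ((q - 1) / d))
    (h : Polynomial F) (f : F → F)
    (hf : ∀ x : F, f x = x ^ 2 * h.eval (x ^ ((q - 1) / d)))
    (hperm : Function.Bijective f)
    (a : F) (ha : a ≠ 0) (c : F) :
    (Finset.univ.filter (fun x : F => f (x + a) - f x = c)).card
      ≤ 2 * d ^ 2 - (3 * d) / 2 := by
  set s := (q - 1) / d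
  have hd0 : 0 < d := Nat.pos_of_ne_zero fun h0 => by simp [s, h0] at hodd
  have h2 : (2 : F) ≠ 0 := Ring.two_ne_zero fun hchar => by
    have := FiniteField.even_card_iff_char_two.1 hchar
    rw [hq] at this
    exact Nat.not_even_iff_odd.2 hqodd (Nat.even_iff.2 this)
  have hcount := two_mul_card_le_of_forall_sub_eq (w := fun y => h.eval y)
    (S := univ.filter fun x => f (x + a) - f x = c) hodd h2 ha hf
    (fun x hx => (mem_filter.1 hx).2) (fun _ hx => pow_mem_nonzeroPowers hx)
    (fun _ => neg_mem_nonzeroPowers hodd) (zero_notMem_nonzeroPowers hodd.pos.ne')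
    (fun _ => ne_zero_of_mem_nonzeroPowers (w := fun y => h.eval y) hf hperm.1)
  exact le_two_mul_sq_sub_of_two_mul_le (two_le_card_nonzeroPowers hodd h2)
    (card_nonzeroPowers_le hd0 (by rw [hq]; exact Nat.div_mul_cancel hd)) hcount

theorem wan_lidl_s2_d_even_du_bound
    (F : Type*) [Field F] [Fintype F] [DecidableEq F]
    (q d : ℕ) (hq : Fintype.card F = q) (hqodd : Odd q)
    (hd : d ∣ q - 1) (hdeven : Even d) (hodd : Odd ((q - 1) / d))
    (h : Polynomial F) (f : F → F)
    (hf : ∀ x : F, f x = x ^ 2 * h.eval (x ^ ((q - 1) / d)))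
    (hperm : Function.Bijective f)
    (a : F) (ha : a ≠ 0) (c : F) :
    (Finset.univ.filter (fun x : F => f (x + a) - f x = c)).card
      ≤ 2 * d ^ 2 - (3 * d) / 2 :=
  wan_lidl_s2_d_even_du_bound_general F q d hq hqodd hd hodd h f hf hperm a ha c
end

section
/- Let q ≡ 3 (mod 4) be a prime power, s even, b nonzero in F_q, η the quadratic character, and f(x) = x^s(η(x)+b). Then the differential uniformity of f equals max over c in F_q of |{x in F_q : f(x+1) - f(x) = c}| joined with max over c of |{x : f'(x+1) - f'(x) = c}| where f'(x) = x^s(η(x)-b); i.e., it suffices to consider the direction a = 1 for f and f' to compute the differential uniformity of f. -/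
theorem du_determined_by_direction_one
    (F : Type*) [Field F] [Fintype F] [DecidableEq F]
    (q s : ℕ) (hq : Fintype.card F = q) (hq3 : q % 4 = 3) (hs : Even s)
    (b : F) (hb : b ≠ 0) (f f' : F → F)
    (hf : ∀ x : F, f x = x ^ s * (x ^ ((q - 1) / 2) + b))
    (hf' : ∀ x : F, f' x = x ^ s * (x ^ ((q - 1) / 2) - b)) :
    (Finset.univ.filter (fun a : F => a ≠ 0)).sup
        (fun a => Finset.univ.sup
          (fun c : F => (Finset.univ.filter (fun x : F => f (x + a) - f x = c)).card))
      = max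
          (Finset.univ.sup
            (fun c : F => (Finset.univ.filter (fun x : F => f (x + 1) - f x = c)).card))
          (Finset.univ.sup
            (fun c : F =>
              (Finset.univ.filter (fun x : F => f' (x + 1) - f' x = c)).card)) := by
  set e := (q - 1) / 2 with he
  have hq2 : 1 < q := by omega
  have he2 : e + e = q - 1 := by omega
  have heodd : Odd e := by
    rw [Nat.odd_iff]; omega
  -- the quadratic character takes values ±1 on nonzero elements
  have heta : ∀ a : F, a ≠ 0 → a ^ e = 1 ∨ a ^ e = -1 := by
    intro a ha
    have h1 : a ^ (q - 1) = 1 := by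
      rw [← hq]; exact FiniteField.pow_card_sub_one_eq_one a ha
    have h2 : a ^ e * a ^ e = 1 := by rw [← pow_add, he2, h1]
    exact mul_self_eq_one_iff.mp h2
  -- scaling lemmas
  have hscale1 : ∀ a : F, a ^ e = 1 → ∀ x : F, f (a * x) = a ^ s * f x := by
    intro a hae x
    rw [hf (a * x), hf x, mul_pow, mul_pow, hae]
    ring
  have hscale2 : ∀ a : F, a ^ e = -1 → ∀ x : F, f (a * x) = -(a ^ s) * f' x := by
    intro a hae x
    rw [hf (a * x), hf' x, mul_pow, mul_pow, hae]
    ring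
  -- card equality under substitution x = a * y
  have cardkey : ∀ (a k : F) (g : F → F), a ≠ 0 → k ≠ 0 →
      (∀ y : F, f (a * y + a) - f (a * y) = k * (g (y + 1) - g y)) → ∀ c : F,
      (Finset.univ.filter (fun x : F => f (x + a) - f x = c)).card
        = (Finset.univ.filter (fun y : F => g (y + 1) - g y = k⁻¹ * c)).card := by
    intro a k g ha hk hrel c
    refine (Finset.card_equiv (Equiv.mulLeft₀ a ha) ?_).symm
    intro y
    simp only [Finset.mem_filter, Finset.mem_univ, true_and, Equiv.mulLeft₀_apply]
    rw [hrel y, eq_inv_mul_iff_mul_eq₀ hk]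
  -- sup-over-c equality under substitution
  have supkey : ∀ (a k : F) (g : F → F), a ≠ 0 → k ≠ 0 →
      (∀ y : F, f (a * y + a) - f (a * y) = k * (g (y + 1) - g y)) →
      Finset.univ.sup
          (fun c : F => (Finset.univ.filter (fun x : F => f (x + a) - f x = c)).card)
        = Finset.univ.sup
          (fun c : F => (Finset.univ.filter (fun y : F => g (y + 1) - g y = c)).card) := by
    intro a k g ha hk hrel
    apply le_antisymm
    · apply Finset.sup_le
      intro c _
      rw [cardkey a k g ha hk hrel c]
      exact Finset.le_sup (f := fun c : F => (Finset.univ.filter (fun y : F => g (y + 1) - g y = c)).card) (Finset.mem_univ _)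
    · apply Finset.sup_le
      intro c _
      have h := cardkey a k g ha hk hrel (k * c)
      rw [inv_mul_cancel_left₀ hk] at h
      rw [← h]
      exact Finset.le_sup (f := fun c : F => (Finset.univ.filter (fun x : F => f (x + a) - f x = c)).card) (Finset.mem_univ _)
  apply le_antisymm
  · apply Finset.sup_le
    intro a ha
    rw [Finset.mem_filter] at ha
    have ha0 : a ≠ 0 := ha.2
    have has : (a : F) ^ s ≠ 0 := pow_ne_zero s ha0
    rcases heta a ha0 with h1 | h1
    · rw [supkey a (a ^ s) f ha0 has ?_]
      · exact le_max_left _ _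
      · intro y
        have : a * y + a = a * (y + 1) := by ring
        rw [this, hscale1 a h1, hscale1 a h1]
        ring
    · rw [supkey a (-(a ^ s)) f' ha0 (neg_ne_zero.mpr has) ?_]
      · exact le_max_right _ _
      · intro y
        have : a * y + a = a * (y + 1) := by ring
        rw [this, hscale2 a h1, hscale2 a h1]
        ring
  · apply max_le
    · exact Finset.le_sup (f := fun a : F => Finset.univ.sup (fun c : F => (Finset.univ.filter (fun x : F => f (x + a) - f x = c)).card)) (by simp : (1 : F) ∈ Finset.univ.filter (fun a : F => a ≠ 0))
    · have hm1 : (-1 : F) ≠ 0 := neg_ne_zero.mpr one_ne_zero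
      have hm1e : (-1 : F) ^ e = -1 := heodd.neg_one_pow
      have hm1s : (-1 : F) ^ s = 1 := hs.neg_one_pow
      have hkey := supkey (-1) (-1) f' hm1 hm1 ?_
      · rw [← hkey]
        exact Finset.le_sup (f := fun a : F => Finset.univ.sup (fun c : F => (Finset.univ.filter (fun x : F => f (x + a) - f x = c)).card)) (by simp : (-1 : F) ∈ Finset.univ.filter (fun a : F => a ≠ 0))
      · intro y
        have h1 : (-1 : F) * y + -1 = (-1) * (y + 1) := by ring
        rw [h1, hscale2 (-1) hm1e, hscale2 (-1) hm1e, hm1s]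
        ring
end

section
/- Let q ≡ 3 (mod 4) be a prime power, s even, b in F_q with b ≠ 1, b ≠ -1, and η(b+1) = -η(b-1), where η is the quadratic character. Then f(x) = x^s(η(x)+b) is a bijection on F_q. -/
theorem wan_lidl_d2_permutation_criterion
    (F : Type*) [Field F] [Fintype F]
    (q s : ℕ) (hq : Fintype.card F = q) (hq3 : q % 4 = 3) (hs : Even s)
    (hgcd : Nat.gcd s ((q - 1) / 2) = 1)
    (b : F) (hb1 : b ≠ 1) (hb2 : b ≠ -1)
    (heta : (b + 1) ^ ((q - 1) / 2) = -((b - 1) ^ ((q - 1) / 2))) :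
    Function.Bijective (fun x : F => x ^ s * (x ^ ((q - 1) / 2) + b)) := by
  set m : ℕ := (q - 1) / 2 with hm_def
  have hq3' : 3 ≤ q := by omega
  have hm_pos : 0 < m := by omega
  -- characteristic is not 2
  have hchar : ringChar F ≠ 2 := by
    intro h
    have := FiniteField.even_card_of_char_two (F := F) h
    rw [hq] at this
    omega
  have h2 : (2 : F) ≠ 0 := Ring.two_ne_zero hchar
  have hb1' : b - 1 ≠ 0 := sub_ne_zero.mpr hb1
  have hb2' : b + 1 ≠ 0 := by
    intro h
    exact hb2 (eq_neg_of_add_eq_zero_left h)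
  rcases Nat.eq_zero_or_pos s with hs0 | hs0
  · -- s = 0 forces m = 1, and the map is x ↦ x + b
    subst hs0
    have hm1 : m = 1 := by simpa using hgcd
    have : (fun x : F => x ^ 0 * (x ^ m + b)) = fun x : F => x + b := by
      funext x; simp [hm1]
    rw [this]
    exact (Equiv.addRight b).bijective
  · -- main case: s > 0
    have hpow : ∀ z : F, z ≠ 0 → z ^ m = 1 ∨ z ^ m = -1 := by
      intro z hz
      have h1 : (z ^ m) ^ 2 = 1 := by
        rw [← pow_mul]
        have hm2 : m * 2 = q - 1 := by omega
        rw [hm2, ← hq]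
        exact FiniteField.pow_card_sub_one_eq_one z hz
      have h0 : (z ^ m - 1) * (z ^ m + 1) = 0 := by linear_combination h1
      rcases mul_eq_zero.mp h0 with h | h
      · exact Or.inl (sub_eq_zero.mp h)
      · exact Or.inr (eq_neg_of_add_eq_zero_left h)
    have hfac : ∀ z : F, z ≠ 0 → z ^ m + b ≠ 0 := by
      intro z hz
      rcases hpow z hz with h | h
      · rw [h]; rw [add_comm]; exact hb2'
      · rw [h]
        intro h'
        apply hb1'
        linear_combination h'
    -- auxiliary: same s-th and m-th powers imply equality
    have haux : ∀ x y : F, y ≠ 0 → x ^ s = y ^ s → x ^ m = y ^ m → x = y := by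
      intro x y hy h1 h2'
      have hzs : (x / y) ^ s = 1 := by
        rw [div_pow, h1, div_self (pow_ne_zero _ hy)]
      have hzm : (x / y) ^ m = 1 := by
        rw [div_pow, h2', div_self (pow_ne_zero _ hy)]
      have hd : orderOf (x / y) ∣ Nat.gcd s m :=
        Nat.dvd_gcd (orderOf_dvd_of_pow_eq_one hzs) (orderOf_dvd_of_pow_eq_one hzm)
      rw [hgcd, Nat.dvd_one] at hd
      have : x / y = 1 := orderOf_eq_one_iff.mp hd
      exact (div_eq_one_iff_eq hy).mp this
    -- mixed-sign case leads to contradiction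
    have hmix : ∀ x y : F, x ≠ 0 → y ≠ 0 → x ^ m = 1 → y ^ m = -1 →
        x ^ s * (x ^ m + b) ≠ y ^ s * (y ^ m + b) := by
      intro x y hx hy hex hey h
      have hmh := congrArg (· ^ m) h
      simp only [mul_pow] at hmh
      rw [pow_right_comm x s m, pow_right_comm y s m, hex, hey, one_pow,
        hs.neg_one_pow, one_mul, one_mul, add_comm (1 : F) b] at hmh
      -- hmh : (b + 1) ^ m = (-1 + b) ^ m
      have hne : (-1 : F) + b = b - 1 := by ring
      rw [hne, heta] at hmh
      have : (2 : F) * (b - 1) ^ m = 0 := by linear_combination -hmh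
      rcases mul_eq_zero.mp this with h' | h'
      · exact h2 h'
      · exact hb1' ((pow_eq_zero_iff hm_pos.ne').mp h')
    rw [Fintype.bijective_iff_injective_and_card]
    refine ⟨?_, rfl⟩
    intro x y h
    simp only at h
    by_cases hx : x = 0 <;> by_cases hy : y = 0
    · rw [hx, hy]
    · exfalso
      rw [hx, zero_pow hs0.ne', zero_mul] at h
      exact mul_ne_zero (pow_ne_zero _ hy) (hfac y hy) h.symm
    · exfalso
      rw [hy, zero_pow hs0.ne', zero_mul] at h
      exact mul_ne_zero (pow_ne_zero _ hx) (hfac x hx) h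
    · rcases hpow x hx with hex | hex <;> rcases hpow y hy with hey | hey
      · apply haux x y hy ?_ (by rw [hex, hey])
        rw [hex, hey] at h
        exact mul_right_cancel₀ (by rw [add_comm]; exact hb2') h
      · exact absurd h (hmix x y hx hy hex hey)
      · exact absurd h.symm (hmix y x hy hx hey hex)
      · apply haux x y hy ?_ (by rw [hex, hey])
        rw [hex, hey] at h
        have hne : (-1 : F) + b ≠ 0 := by
          intro h'; apply hb1'; linear_combination h'
        exact mul_right_cancel₀ hne h
end
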